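/- arXiv:1904.04768 — 3 statements merged into one kernel-verified Lean document; each statement's English description precedes it below -/
import Mathlib

section
/- Let K ⊆ ℝ^d be compact, Q ⊆ ℝ^d open, and τ > 0. If 𝒮 ⊆ 𝒰 is a (τ,K,Q)-spanning set, then 𝒮 contains a finite subset 𝒮′ that is also (τ,K,Q)-spanning. -/
open MeasureTheory Filter Topology ENNReal
open scoped ENNReal

set_option maxHeartbeats 1000000
noncomputable section

/-- Admissible controls: measurable functions with values in the control range `U`
almost everywhere. -/
def IsAdmissibleControl {m : ℕ} (U : Set (Fin m → ℝ)) (ω : ℝ → Fin m → ℝ) : Prop :=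
  Measurable ω ∧ ∀ᵐ t : ℝ, ω t ∈ U

/-- Solution `φ(t,x,ω) = e^{tA} x + ∫₀ᵗ e^{(t-s)A} B ω(s) ds` of the linear control system
`ẋ = Ax + Bω` (variation of constants). -/
def linSol {d m : ℕ} (A : Matrix (Fin d) (Fin d) ℝ) (B : Matrix (Fin d) (Fin m) ℝ)
    (t : ℝ) (x : Fin d → ℝ) (ω : ℝ → Fin m → ℝ) : Fin d → ℝ :=
  (NormedSpace.exp (t • A)).mulVec x +
    ∫ s in (0:ℝ)..t, (NormedSpace.exp ((t - s) • A)).mulVec (B.mulVec (ω s))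

/-- A `(τ,K,Q)`-spanning set of admissible controls. -/
def IsSpanningSet {d m : ℕ} (A : Matrix (Fin d) (Fin d) ℝ) (B : Matrix (Fin d) (Fin m) ℝ)
    (U : Set (Fin m → ℝ)) (K Q : Set (Fin d → ℝ)) (τ : ℝ)
    (S : Set (ℝ → Fin m → ℝ)) : Prop :=
  (∀ ω ∈ S, IsAdmissibleControl U ω) ∧
    ∀ x ∈ K, ∃ ω ∈ S, ∀ t ∈ Set.Icc (0:ℝ) τ, linSol A B t x ω ∈ Q

/-- An admissible pair `(K,Q)`: `K` and `Q` nonempty, `K` compact, and every point of `K`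
can be kept inside `Q` for all positive times by some admissible control. -/
def IsAdmissiblePair {d m : ℕ} (A : Matrix (Fin d) (Fin d) ℝ) (B : Matrix (Fin d) (Fin m) ℝ)
    (U : Set (Fin m → ℝ)) (K Q : Set (Fin d → ℝ)) : Prop :=
  K.Nonempty ∧ Q.Nonempty ∧ IsCompact K ∧
    ∀ x ∈ K, ∃ ω, IsAdmissibleControl U ω ∧ ∀ t ≥ (0:ℝ), linSol A B t x ω ∈ Q

/-- The quantity `a_τ(f,K,Q)`: the infimum over countable `(τ,K,Q)`-spanning sets `S` of
`∑_{ω ∈ S} e^{∫₀^τ f(ω(t)) dt}` (equal to `+∞` if no countable spanning set exists). -/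
def aInv {d m : ℕ} (A : Matrix (Fin d) (Fin d) ℝ) (B : Matrix (Fin d) (Fin m) ℝ)
    (U : Set (Fin m → ℝ)) (K Q : Set (Fin d → ℝ)) (f : (Fin m → ℝ) → ℝ) (τ : ℝ) : ℝ≥0∞ :=
  ⨅ (S : Set (ℝ → Fin m → ℝ)) (_ : S.Countable) (_ : IsSpanningSet A B U K Q τ S),
    ∑' ω : S, ENNReal.ofReal (Real.exp (∫ t in (0:ℝ)..τ, f (ω.1 t)))

/-- The invariance pressure `P_inv(f,K,Q) = limsup_{τ→∞} (1/τ) log a_τ(f,K,Q)`. -/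
def PInv {d m : ℕ} (A : Matrix (Fin d) (Fin d) ℝ) (B : Matrix (Fin d) (Fin m) ℝ)
    (U : Set (Fin m → ℝ)) (K Q : Set (Fin d → ℝ)) (f : (Fin m → ℝ) → ℝ) : EReal :=
  Filter.limsup (fun τ : ℝ => ((1 / τ : ℝ) : EReal) * (aInv A B U K Q f τ).log) Filter.atTop

lemma contExpAux {d : ℕ} (A : Matrix (Fin d) (Fin d) ℝ) :
    Continuous fun t : ℝ => NormedSpace.exp (t • A) := by
  letI := Matrix.linftyOpNormedRing (n := Fin d) (α := ℝ)
  letI := Matrix.linftyOpNormedAlgebra (n := Fin d) (R := ℝ) (α := ℝ)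
  letI : NormedAlgebra ℚ (Matrix (Fin d) (Fin d) ℝ) := NormedAlgebra.restrictScalars ℚ ℝ _
  exact NormedSpace.exp_continuous.comp (continuous_id.smul continuous_const)

lemma contMulVecAux {n k : ℕ} :
    Continuous fun p : Matrix (Fin n) (Fin k) ℝ × (Fin k → ℝ) => p.1.mulVec p.2 := by
  apply continuous_pi
  intro i
  simp only [Matrix.mulVec, dotProduct]
  exact continuous_finset_sum _ fun j _ =>
    (((continuous_apply j).comp ((continuous_apply i).comp continuous_fst)).mul
      ((continuous_apply j).comp continuous_snd))

lemma keyNbhd {d m : ℕ} (A : Matrix (Fin d) (Fin d) ℝ) (B : Matrix (Fin d) (Fin m) ℝ)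
    {U : Set (Fin m → ℝ)} (hU : IsCompact U) {Q : Set (Fin d → ℝ)} (hQ : IsOpen Q)
    {τ : ℝ} {ω : ℝ → Fin m → ℝ} (hω : IsAdmissibleControl U ω)
    {x₀ : Fin d → ℝ} (hx₀ : ∀ t ∈ Set.Icc (0:ℝ) τ, linSol A B t x₀ ω ∈ Q) :
    ∃ V ∈ 𝓝 x₀, ∀ x ∈ V, ∀ t ∈ Set.Icc (0:ℝ) τ, linSol A B t x ω ∈ Q := by
  set Φ : ℝ × (Fin m → ℝ) → Fin d → ℝ :=
    fun p => (NormedSpace.exp ((-p.1) • A)).mulVec (B.mulVec p.2) with hΦdef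
  have hΦ : Continuous Φ := by
    rw [hΦdef]
    exact contMulVecAux.comp
      (((contExpAux A).comp continuous_fst.neg).prodMk
        (contMulVecAux.comp (continuous_const.prodMk continuous_snd)))
  set g : ℝ → Fin d → ℝ := fun s => Φ (s, ω s) with hg
  have hgm : AEStronglyMeasurable g volume := by
    have h1 : Measurable fun s : ℝ => Φ (s, ω s) :=
      hΦ.measurable.comp (measurable_id.prodMk hω.1)
    exact h1.aestronglyMeasurable
  -- interval integrability of `g` on every interval
  have hgint : ∀ a b : ℝ, IntervalIntegrable g volume a b := by
    intro a b
    have hC : IsCompact (Set.uIcc a b ×ˢ U) := isCompact_uIcc.prod hU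
    obtain ⟨C, hCb⟩ := hC.exists_bound_of_continuousOn hΦ.continuousOn
    rw [intervalIntegrable_iff]
    apply Integrable.mono' (g := fun _ => C) (integrableOn_const measure_Ioc_lt_top.ne)
      hgm.restrict
    have h1 : ∀ᵐ s ∂(volume.restrict (Set.uIoc a b)), ω s ∈ U := ae_restrict_of_ae hω.2
    have h2 : ∀ᵐ s ∂(volume.restrict (Set.uIoc a b)), s ∈ Set.uIoc a b :=
      ae_restrict_mem measurableSet_uIoc
    filter_upwards [h1, h2] with s hs1 hs2
    exact hCb (s, ω s) ⟨Set.uIoc_subset_uIcc hs2, hs1⟩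
  -- the primitive of `g`
  set P : ℝ → Fin d → ℝ := fun t => ∫ s in (0:ℝ)..t, g s with hP
  have hPc : Continuous P := intervalIntegral.continuous_primitive hgint 0
  -- rewrite `linSol` via the primitive
  have hlin : ∀ (t : ℝ) (x : Fin d → ℝ),
      linSol A B t x ω =
        (NormedSpace.exp (t • A)).mulVec x +
          (NormedSpace.exp (t • A)).mulVec (P t) := by
    intro t x
    have hexp : ∀ s : ℝ, NormedSpace.exp ((t - s) • A) =
        NormedSpace.exp (t • A) * NormedSpace.exp ((-s) • A) := by
      intro s
      have h1 : (t - s) • A = t • A + (-s) • A := by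
        rw [sub_eq_add_neg, add_smul]
      rw [h1, Matrix.exp_add_of_commute]
      exact ((Commute.refl A).smul_left t).smul_right (-s)
    set L := (Matrix.mulVecLin (NormedSpace.exp (t • A))).toContinuousLinearMap with hLdef
    have hLapp : ∀ v : Fin d → ℝ, L v = (NormedSpace.exp (t • A)).mulVec v := by
      intro v
      rw [hLdef]
      simp
    have hrw : (fun s => (NormedSpace.exp ((t - s) • A)).mulVec (B.mulVec (ω s))) =
        fun s => L (g s) := by
      funext s
      rw [hLapp, hg, hΦdef]
      rw [hexp s]
      simp [- Matrix.mulVec_mulVec, ← Matrix.mulVec_mulVec]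
    unfold linSol
    rw [hrw]
    congr 1
    rw [L.intervalIntegral_comp_comm (hgint 0 t), hLapp]
  -- joint continuity & tube lemma
  set F : ℝ × (Fin d → ℝ) → Fin d → ℝ :=
    fun p => (NormedSpace.exp (p.1 • A)).mulVec p.2 +
      (NormedSpace.exp (p.1 • A)).mulVec (P p.1) with hFdef
  have hFc : Continuous F := by
    rw [hFdef]
    apply Continuous.add
    · exact contMulVecAux.comp (((contExpAux A).comp continuous_fst).prodMk continuous_snd)
    · exact contMulVecAux.comp
        (((contExpAux A).comp continuous_fst).prodMk (hPc.comp continuous_fst))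
  have hFlin : ∀ (t : ℝ) (x : Fin d → ℝ), linSol A B t x ω = F (t, x) := by
    intro t x
    rw [hFdef, hlin t x]
  have hsub : Set.Icc (0:ℝ) τ ×ˢ ({x₀} : Set (Fin d → ℝ)) ⊆ F ⁻¹' Q := by
    rintro ⟨t, x⟩ ⟨ht, hx⟩
    simp only [Set.mem_singleton_iff] at hx
    subst hx
    have h := hx₀ t ht
    rw [hFlin t x] at h
    exact h
  obtain ⟨u, v, hu, hv, hIu, hxv, huv⟩ :=
    generalized_tube_lemma isCompact_Icc isCompact_singleton (hQ.preimage hFc) hsub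
  refine ⟨v, hv.mem_nhds (hxv rfl), fun x hx t ht => ?_⟩
  have h : (t, x) ∈ F ⁻¹' Q := huv ⟨hIu ht, hx⟩
  rw [hFlin t x]
  exact h

/-- If `K` is compact and `Q` is open, then every `(τ,K,Q)`-spanning set contains a finite
`(τ,K,Q)`-spanning subset. -/
theorem exists_finite_spanning_subset {d m : ℕ} (A : Matrix (Fin d) (Fin d) ℝ)
    (B : Matrix (Fin d) (Fin m) ℝ) (U : Set (Fin m → ℝ)) (hU : IsCompact U)
    (K Q : Set (Fin d → ℝ)) (hK : IsCompact K) (hQ : IsOpen Q) (τ : ℝ) (hτ : 0 < τ)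
    (S : Set (ℝ → Fin m → ℝ)) (hS : IsSpanningSet A B U K Q τ S) :
    ∃ S' ⊆ S, S'.Finite ∧ IsSpanningSet A B U K Q τ S' := by
  obtain ⟨hadm, hspan⟩ := hS
  have key' : ∀ x ∈ K, ∃ ω ∈ S, ∃ V ∈ 𝓝 x,
      ∀ x' ∈ V, ∀ t ∈ Set.Icc (0:ℝ) τ, linSol A B t x' ω ∈ Q := by
    intro x hx
    obtain ⟨ω, hωS, hωQ⟩ := hspan x hx
    obtain ⟨V, hV, hVQ⟩ := keyNbhd A B hU hQ (hadm ω hωS) hωQ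
    exact ⟨ω, hωS, V, hV, hVQ⟩
  choose ω hωS V hV hVQ using key'
  obtain ⟨t, ht⟩ := hK.elim_nhds_subcover' (fun x hx => V x hx) (fun x hx => hV x hx)
  refine ⟨(fun p : K => ω p.1 p.2) '' ↑t, ?_, t.finite_toSet.image _, ?_, ?_⟩
  · rintro _ ⟨p, _, rfl⟩
    exact hωS p.1 p.2
  · rintro _ ⟨p, _, rfl⟩
    exact hadm _ (hωS p.1 p.2)
  · intro x hx
    have hmem := ht hx
    rw [Set.mem_iUnion₂] at hmem
    obtain ⟨p, hp, hxV⟩ := hmem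
    exact ⟨ω p.1 p.2, ⟨p, hp, rfl⟩, hVQ p.1 p.2 x hxV⟩

end
end

section
/- Assume the pair (A,B) satisfies the Kalman rank condition (the columns of B, AB, …, A^{d−1}B span ℝ^d) and that U is a compact neighborhood of the origin in ℝ^m. Let T₀ > 0 and let ω₁ ∈ 𝒰 be T₀-periodic with ω₁(t) contained in a compact subset of the interior of U for almost every t, and suppose x₁ ∈ ℝ^d satisfies φ(T₀, x₁, ω₁) = x₁. Then there exists a control set D such that x₁ lies in the interior of D and the whole periodic trajectory satisfies φ(t, x₁, ω₁) ∈ int D for all t ∈ ℝ. -/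
open MeasureTheory Filter Topology ENNReal
open scoped ENNReal

noncomputable section
set_option maxHeartbeats 1000000
set_option synthInstance.maxHeartbeats 100000

/-- A control set `D`: controlled invariance, approximate controllability, and maximality
with respect to these two properties. -/
def IsControlSet {d m : ℕ} (A : Matrix (Fin d) (Fin d) ℝ) (B : Matrix (Fin d) (Fin m) ℝ)
    (U : Set (Fin m → ℝ)) (D : Set (Fin d → ℝ)) : Prop :=
  ((∀ x ∈ D, ∃ ω, IsAdmissibleControl U ω ∧ ∀ t ≥ (0:ℝ), linSol A B t x ω ∈ D) ∧
    ∀ x ∈ D, D ⊆ closure {y | ∃ s > (0:ℝ), ∃ ω, IsAdmissibleControl U ω ∧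
      y = linSol A B s x ω}) ∧
    ∀ D' : Set (Fin d → ℝ), D ⊆ D' →
      ((∀ x ∈ D', ∃ ω, IsAdmissibleControl U ω ∧ ∀ t ≥ (0:ℝ), linSol A B t x ω ∈ D') ∧
        ∀ x ∈ D', D' ⊆ closure {y | ∃ s > (0:ℝ), ∃ ω, IsAdmissibleControl U ω ∧
          y = linSol A B s x ω}) →
      D' = D

/-- The Kalman rank condition: the columns of `B, AB, …, A^{d-1}B` span `ℝ^d`. -/
def KalmanRank {d m : ℕ} (A : Matrix (Fin d) (Fin d) ℝ)
    (B : Matrix (Fin d) (Fin m) ℝ) : Prop :=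
  Submodule.span ℝ
    {v : Fin d → ℝ | ∃ (k : ℕ) (j : Fin m), k < d ∧ v = fun i => ((A ^ k) * B) i j} = ⊤

namespace CP
open NormedSpace Set
open scoped Matrix
attribute [local instance] Matrix.linftyOpNormedAddCommGroup Matrix.linftyOpNormedSpace
  Matrix.linftyOpNormedRing Matrix.linftyOpNormedAlgebra

variable {d m : ℕ} (A : Matrix (Fin d) (Fin d) ℝ) (B : Matrix (Fin d) (Fin m) ℝ)

def E (t : ℝ) : Matrix (Fin d) (Fin d) ℝ := exp (t • A)

lemma E_zero : E A 0 = 1 := by simp [E, exp_zero]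

lemma E_add (s t : ℝ) : E A (s + t) = E A s * E A t := by
  rw [E, add_smul]
  exact Matrix.exp_add_of_commute _ _ (((Commute.refl A).smul_left s).smul_right t)

lemma E_cont : Continuous (E A) :=
  exp_continuous.comp (continuous_id.smul continuous_const)

lemma E_commute (t : ℝ) : Commute A (E A t) := ((Commute.refl A).smul_right t).exp_right

lemma E_mul_neg (t : ℝ) : E A t * E A (-t) = 1 := by
  rw [← E_add, add_neg_cancel, E_zero]

lemma E_hasDerivAt (t : ℝ) : HasDerivAt (E A) (A * E A t) t := by
  exact hasDerivAt_exp_smul_const' (𝕂 := ℝ) A t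

/-- integrand -/
def intg (t : ℝ) (ω : ℝ → Fin m → ℝ) (s : ℝ) : Fin d → ℝ :=
  (E A (t - s)).mulVec (B.mulVec (ω s))

lemma linSol_eq (t : ℝ) (x : Fin d → ℝ) (ω : ℝ → Fin m → ℝ) :
    linSol A B t x ω = (E A t).mulVec x + ∫ s in (0:ℝ)..t, intg A B t ω s := rfl

/-- boundedness and measurability of a control -/
def Bdd (ω : ℝ → Fin m → ℝ) : Prop := Measurable ω ∧ ∃ R, ∀ᵐ s : ℝ, ‖ω s‖ ≤ R

lemma measurable_intg (t : ℝ) {ω : ℝ → Fin m → ℝ} (hm : Measurable ω) :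
    Measurable (intg A B t ω) := by
  apply measurable_pi_lambda
  intro i
  have : (fun s => intg A B t ω s i) =
      fun s => ∑ k, (E A (t - s)) i k * (∑ j, B k j * ω s j) := by
    funext s; simp [intg, Matrix.mulVec, dotProduct]
  rw [this]
  refine Finset.measurable_sum _ fun k _ => Measurable.mul ?_ ?_
  · have hc : Continuous fun s => (E A (t - s)) i k :=
      (continuous_apply_apply i k).comp ((E_cont A).comp (continuous_const.sub continuous_id))
    exact hc.measurable
  · exact Finset.measurable_sum _ fun j _ =>
      measurable_const.mul ((measurable_pi_apply j).comp hm)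

lemma intg_II (t : ℝ) {ω : ℝ → Fin m → ℝ} (hω : Bdd ω) (a b : ℝ) :
    IntervalIntegrable (intg A B t ω) volume a b := by
  obtain ⟨hm, R, hR⟩ := hω
  obtain ⟨C, hC⟩ := (isCompact_uIcc (a := a) (b := b)).exists_bound_of_continuousOn
    (f := fun s => E A (t - s))
    (((E_cont A).comp (continuous_const.sub continuous_id)).continuousOn)
  rw [intervalIntegrable_iff]
  have hconst : IntegrableOn (fun _ : ℝ => C * (‖B‖ * R)) (Set.uIoc a b) volume :=
    integrableOn_const measure_Ioc_lt_top.ne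
  refine Integrable.mono' hconst
    ((measurable_intg A B t hm).aestronglyMeasurable) ?_
  · refine (ae_restrict_iff' measurableSet_uIoc).2 ?_
    filter_upwards [hR] with s hs hmem
    calc ‖intg A B t ω s‖ ≤ ‖E A (t - s)‖ * ‖B.mulVec (ω s)‖ :=
          Matrix.linfty_opNorm_mulVec _ _
      _ ≤ C * (‖B‖ * R) := by
          have h1 : ‖E A (t - s)‖ ≤ C := hC _ (uIoc_subset_uIcc hmem)
          have h2 : ‖B.mulVec (ω s)‖ ≤ ‖B‖ * R := by
            calc ‖B.mulVec (ω s)‖ ≤ ‖B‖ * ‖ω s‖ := Matrix.linfty_opNorm_mulVec _ _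
              _ ≤ ‖B‖ * R := by
                  exact mul_le_mul_of_nonneg_left hs (norm_nonneg _)
          calc ‖E A (t - s)‖ * ‖B.mulVec (ω s)‖ ≤ C * ‖B.mulVec (ω s)‖ :=
                mul_le_mul_of_nonneg_right h1 (norm_nonneg _)
            _ ≤ C * (‖B‖ * R) := by
                refine mul_le_mul_of_nonneg_left h2 ?_
                exact le_trans (norm_nonneg _) h1


lemma ae_shift {p : ℝ → Prop} (c : ℝ) (h : ∀ᵐ t : ℝ, p t) : ∀ᵐ t : ℝ, p (t + c) := by
  rw [ae_iff] at h ⊢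
  have : {t : ℝ | ¬ p (t + c)} = (fun t : ℝ => t + c) ⁻¹' {t : ℝ | ¬ p t} := rfl
  rw [this, measure_preimage_add_right]
  exact h

lemma ae_ne (s : ℝ) : ∀ᵐ r : ℝ, r ≠ s := by
  rw [ae_iff]
  simpa using Real.volume_singleton

lemma linSol_congr (t : ℝ) (x : Fin d → ℝ) {ω ω' : ℝ → Fin m → ℝ}
    (h : ∀ᵐ s : ℝ, s ∈ Set.uIoc 0 t → ω s = ω' s) :
    linSol A B t x ω = linSol A B t x ω' := by
  rw [linSol_eq, linSol_eq]
  congr 1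
  refine intervalIntegral.integral_congr_ae ?_
  filter_upwards [h] with s hs hmem
  simp [intg, hs hmem]

lemma linSol_zero (x : Fin d → ℝ) (ω : ℝ → Fin m → ℝ) : linSol A B 0 x ω = x := by
  rw [linSol_eq, E_zero]
  simp

/-- the matrix `mulVec` as a continuous linear map -/
def mulVecCLM (M : Matrix (Fin d) (Fin d) ℝ) : (Fin d → ℝ) →L[ℝ] (Fin d → ℝ) :=
  LinearMap.toContinuousLinearMap M.mulVecLin

@[simp] lemma mulVecCLM_apply (M : Matrix (Fin d) (Fin d) ℝ) (v : Fin d → ℝ) :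
    mulVecCLM M v = M.mulVec v := rfl

/-- The cocycle property of solutions. -/
lemma linSol_cocycle {ω : ℝ → Fin m → ℝ} (hω : Bdd ω) (s t : ℝ) (x : Fin d → ℝ) :
    linSol A B (s + t) x ω = linSol A B t (linSol A B s x ω) (fun u => ω (u + s)) := by
  have hω' : Bdd (fun u => ω (u + s)) := by
    obtain ⟨hm, R, hR⟩ := hω
    exact ⟨hm.comp (measurable_add_const s), R, ae_shift s hR⟩
  rw [linSol_eq, linSol_eq, linSol_eq]
  rw [Matrix.mulVec_add, Matrix.mulVec_mulVec, ← E_add]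
  -- pull E A t inside the integral
  have h1 : (E A t).mulVec (∫ r in (0:ℝ)..s, intg A B s ω r)
      = ∫ r in (0:ℝ)..s, intg A B (s + t) ω r := by
    rw [show (E A t).mulVec (∫ r in (0:ℝ)..s, intg A B s ω r)
        = mulVecCLM (E A t) (∫ r in (0:ℝ)..s, intg A B s ω r) from rfl,
      ← ContinuousLinearMap.intervalIntegral_comp_comm _ (intg_II A B s hω 0 s)]
    refine intervalIntegral.integral_congr fun r _ => ?_
    simp only [mulVecCLM_apply, intg, Matrix.mulVec_mulVec, ← Matrix.mul_assoc, ← E_add]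
    have : t + (s - r) = s + t - r := by ring
    rw [this]
  have h2 : (∫ r in (0:ℝ)..t, intg A B t (fun u => ω (u + s)) r)
      = ∫ r in s..(s + t), intg A B (s + t) ω r := by
    have := intervalIntegral.integral_comp_add_right (a := (0:ℝ)) (b := t)
      (fun r => intg A B (s + t) ω r) s
    rw [zero_add, add_comm t s] at this
    rw [← this]
    refine intervalIntegral.integral_congr fun r _ => ?_
    simp only [intg]
    have : s + t - (r + s) = t - r := by ring
    rw [this]
  rw [h1, h2, add_assoc]
  congr 1
  · congr 1; rw [add_comm t s]
  · rw [intervalIntegral.integral_add_adjacent_intervals (intg_II A B (s+t) hω 0 s)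
      (intg_II A B (s+t) hω s (s+t))]


lemma linSol_shift_x (t : ℝ) (x y : Fin d → ℝ) (ω : ℝ → Fin m → ℝ) :
    linSol A B t x ω = linSol A B t y ω + (E A t).mulVec (x - y) := by
  rw [linSol_eq, linSol_eq, Matrix.mulVec_sub]
  abel

lemma linSol_add_control (t : ℝ) (x : Fin d → ℝ) {ω v : ℝ → Fin m → ℝ}
    (hω : Bdd ω) (hv : Bdd v) :
    linSol A B t x (fun s => ω s + v s)
      = linSol A B t x ω + ∫ s in (0:ℝ)..t, intg A B t v s := by
  have hsum : Bdd (fun s => ω s + v s) := by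
    obtain ⟨hm, R, hR⟩ := hω; obtain ⟨hm', R', hR'⟩ := hv
    refine ⟨hm.add hm', R + R', ?_⟩
    filter_upwards [hR, hR'] with s h1 h2
    exact (norm_add_le _ _).trans (add_le_add h1 h2)
  rw [linSol_eq, linSol_eq]
  have hptw : ∀ s, intg A B t (fun u => ω u + v u) s = intg A B t ω s + intg A B t v s := by
    intro s
    simp [intg, Matrix.mulVec_add]
  rw [show (∫ s in (0:ℝ)..t, intg A B t (fun u => ω u + v u) s)
      = ∫ s in (0:ℝ)..t, (intg A B t ω s + intg A B t v s) from
      intervalIntegral.integral_congr fun s _ => hptw s,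
    intervalIntegral.integral_add (intg_II A B t hω 0 t) (intg_II A B t hv 0 t)]
  abel

/-- concatenation of controls -/
def concat (s : ℝ) (ωa ωb : ℝ → Fin m → ℝ) : ℝ → Fin m → ℝ :=
  fun t => if t < s then ωa t else ωb (t - s)

lemma concat_admissible {U : Set (Fin m → ℝ)} (s : ℝ) {ωa ωb : ℝ → Fin m → ℝ}
    (ha : IsAdmissibleControl U ωa) (hb : IsAdmissibleControl U ωb) :
    IsAdmissibleControl U (concat s ωa ωb) := by
  constructor
  · exact Measurable.ite (measurableSet_lt measurable_id measurable_const) ha.1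
      (hb.1.comp (measurable_id.sub measurable_const))
  · have hb' : ∀ᵐ t : ℝ, ωb (t + -s) ∈ U := ae_shift (-s) hb.2
    filter_upwards [ha.2, hb'] with t h1 h2
    unfold concat
    split_ifs
    · exact h1
    · rw [sub_eq_add_neg]; exact h2

lemma bdd_of_admissible {U : Set (Fin m → ℝ)} (hU : Bornology.IsBounded U)
    {ω : ℝ → Fin m → ℝ} (h : IsAdmissibleControl U ω) : Bdd ω := by
  obtain ⟨R, hR⟩ := hU.subset_closedBall 0
  refine ⟨h.1, R, ?_⟩
  filter_upwards [h.2] with s hs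
  exact mem_closedBall_zero_iff.1 (hR hs)

lemma concat_sol_left {ωa ωb : ℝ → Fin m → ℝ} {s : ℝ} (hs : 0 ≤ s)
    (x : Fin d → ℝ) (t : ℝ) (ht0 : 0 ≤ t) (hts : t ≤ s) :
    linSol A B t x (concat s ωa ωb) = linSol A B t x ωa := by
  refine linSol_congr A B t x ?_
  filter_upwards [ae_ne s] with r hr hmem
  rw [Set.uIoc_of_le ht0] at hmem
  have : r < s := lt_of_le_of_ne (hmem.2.trans hts) hr
  simp [concat, this]

lemma concat_sol_right {ωa ωb : ℝ → Fin m → ℝ} {s : ℝ} (hconc : Bdd (concat s ωa ωb))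
    (hs : 0 ≤ s) (x : Fin d → ℝ) (t : ℝ) (ht0 : 0 ≤ t) :
    linSol A B (s + t) x (concat s ωa ωb) = linSol A B t (linSol A B s x ωa) ωb := by
  rw [linSol_cocycle A B hconc s t x]
  rw [concat_sol_left A B hs x s hs le_rfl]
  refine linSol_congr A B t _ ?_
  refine Filter.Eventually.of_forall fun r hmem => ?_
  rw [Set.uIoc_of_le ht0] at hmem
  have h1 : ¬ (r + s < s) := by linarith [hmem.1]
  simp [concat, h1]


lemma vecMul_smulM {k : ℕ} (v : Fin d → ℝ) (c : ℝ) (P : Matrix (Fin d) (Fin k) ℝ) :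
    v ᵥ* (c • P) = c • (v ᵥ* P) := by
  funext j
  simp only [Matrix.vecMul, dotProduct, Matrix.smul_apply, Pi.smul_apply, smul_eq_mul,
    Finset.mul_sum]
  exact Finset.sum_congr rfl fun i _ => by ring

/-- dot product with `η` as a linear map -/
def lmDot (η : Fin d → ℝ) : (Fin d → ℝ) →ₗ[ℝ] ℝ where
  toFun := fun w => η ⬝ᵥ w
  map_add' := fun a b => dotProduct_add η a b
  map_smul' := fun c a => by
    simp [dotProduct_smul, smul_eq_mul]

/-- the scalar functional `X ↦ ((η ᵥ* (M * X)) ᵥ* B) j` as a continuous linear map -/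
def matL (η : Fin d → ℝ) (M : Matrix (Fin d) (Fin d) ℝ) (j : Fin m) :
    Matrix (Fin d) (Fin d) ℝ →L[ℝ] ℝ :=
  LinearMap.toContinuousLinearMap
    { toFun := fun X => ((η ᵥ* (M * X)) ᵥ* B) j
      map_add' := fun X Y => by
        simp [Matrix.mul_add, Matrix.vecMul_add, Matrix.add_vecMul, Pi.add_apply]
      map_smul' := fun c X => by
        simp [Matrix.mul_smul, vecMul_smulM, Matrix.smul_vecMul, Pi.smul_apply,
          smul_eq_mul] }

@[simp] lemma matL_apply (η : Fin d → ℝ) (M : Matrix (Fin d) (Fin d) ℝ) (j : Fin m)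
    (X : Matrix (Fin d) (Fin d) ℝ) : matL B η M j X = ((η ᵥ* (M * X)) ᵥ* B) j := rfl

lemma eta_zero (hKal : KalmanRank A B) {τ : ℝ} (hτ : 0 < τ) (η : Fin d → ℝ)
    (hη : ∀ v : ℝ → Fin m → ℝ, Continuous v →
      η ⬝ᵥ (∫ s in (0:ℝ)..τ, intg A B τ v s) = 0) : η = 0 := by
  classical
  -- the function gbar
  set gbar : ℝ → Fin m → ℝ := fun s => (η ᵥ* (E A (τ - s))) ᵥ* B with hgbar
  have hgbar_cont : Continuous gbar := by
    refine continuous_pi fun j => ?_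
    have : (fun s => gbar s j) = fun s => matL B η 1 j (E A (τ - s)) := by
      funext s; simp [hgbar]
    rw [this]
    exact (matL B η 1 j).continuous.comp
      ((E_cont A).comp (continuous_const.sub continuous_id))
  -- dot product through the integral
  have key : ∀ v : ℝ → Fin m → ℝ, Continuous v →
      (∫ s in (0:ℝ)..τ, gbar s ⬝ᵥ v s) = 0 := by
    intro v hv
    have hII : IntervalIntegrable (intg A B τ v) MeasureTheory.volume 0 τ := by
      apply Continuous.intervalIntegrable
      exact Continuous.matrix_mulVec
        ((E_cont A).comp (continuous_const.sub continuous_id))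
        (Continuous.matrix_mulVec continuous_const hv)
    have hL := (LinearMap.toContinuousLinearMap (lmDot η)).intervalIntegral_comp_comm hII
      (a := 0) (b := τ)
    have h2 : (∫ s in (0:ℝ)..τ, (LinearMap.toContinuousLinearMap (lmDot η)) (intg A B τ v s))
        = η ⬝ᵥ (∫ s in (0:ℝ)..τ, intg A B τ v s) := hL
    have h3 : ∀ s, (LinearMap.toContinuousLinearMap (lmDot η)) (intg A B τ v s)
        = gbar s ⬝ᵥ v s := by
      intro s
      show η ⬝ᵥ (E A (τ - s)).mulVec (B.mulVec (v s)) = _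
      rw [Matrix.dotProduct_mulVec, Matrix.dotProduct_mulVec]
    calc (∫ s in (0:ℝ)..τ, gbar s ⬝ᵥ v s)
        = ∫ s in (0:ℝ)..τ, (LinearMap.toContinuousLinearMap (lmDot η)) (intg A B τ v s) :=
          (intervalIntegral.integral_congr fun s _ => (h3 s).symm)
      _ = η ⬝ᵥ (∫ s in (0:ℝ)..τ, intg A B τ v s) := h2
      _ = 0 := hη v hv
  -- gbar vanishes on Ioo 0 τ
  have hsq_cont : Continuous fun s => gbar s ⬝ᵥ gbar s := by
    simp only [dotProduct]
    exact continuous_finset_sum _ fun j _ =>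
      ((continuous_apply j).comp hgbar_cont).mul ((continuous_apply j).comp hgbar_cont)
  have hsq_nonneg : ∀ s, 0 ≤ gbar s ⬝ᵥ gbar s := by
    intro s
    exact Finset.sum_nonneg fun j _ => mul_self_nonneg _
  have hzero : ∀ u ∈ Set.Ioo (0:ℝ) τ, gbar u = 0 := by
    have hint0 : (∫ s in (0:ℝ)..τ, gbar s ⬝ᵥ gbar s) = 0 := key gbar hgbar_cont
    have hII : IntervalIntegrable (fun s => gbar s ⬝ᵥ gbar s) MeasureTheory.volume 0 τ :=
      hsq_cont.intervalIntegrable _ _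
    have hae : (fun s => gbar s ⬝ᵥ gbar s) =ᵐ[MeasureTheory.volume.restrict (Set.Ioc 0 τ)] 0 := by
    -- via integral_eq_zero_iff_of_le_of_nonneg_ae
      refine (intervalIntegral.integral_eq_zero_iff_of_le_of_nonneg_ae hτ.le ?_ hII).1 hint0
      exact Filter.Eventually.of_forall fun s => hsq_nonneg s
    intro u hu
    by_contra hne
    have hpos : 0 < gbar u ⬝ᵥ gbar u := by
      rcases lt_or_eq_of_le (hsq_nonneg u) with h | h
      · exact h
      · exfalso
        apply hne
        have : ∀ j, gbar u j = 0 := by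
          intro j
          have := (Finset.sum_eq_zero_iff_of_nonneg
            (fun j _ => mul_self_nonneg (gbar u j))).1 h.symm j (Finset.mem_univ j)
          exact mul_self_eq_zero.1 this
        funext j; exact this j
    have hopen2 : IsOpen {s : ℝ | ¬ gbar s ⬝ᵥ gbar s = 0} := by
      have h4 := isOpen_ne_fun hsq_cont (continuous_const (y := (0:ℝ)))
      simpa [Ne] using h4
    set O : Set ℝ := Set.Ioo 0 τ ∩ {s | ¬ gbar s ⬝ᵥ gbar s = 0} with hO
    have hOopen : IsOpen O := isOpen_Ioo.inter hopen2
    have hOne : O.Nonempty := ⟨u, hu, hpos.ne'⟩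
    have h2 := MeasureTheory.ae_iff.1 hae
    simp only [Pi.zero_apply] at h2
    rw [MeasureTheory.Measure.restrict_apply hopen2.measurableSet] at h2
    have hO0 : MeasureTheory.volume O = 0 := by
      refine measure_mono_null ?_ h2
      rintro s ⟨hs1, hs2⟩
      exact ⟨hs2, Set.Ioo_subset_Ioc_self hs1⟩
    exact (hOopen.measure_pos MeasureTheory.volume hOne).ne' hO0
  -- the iterated functions vanish
  have hG : ∀ k : ℕ, ∀ u ∈ Set.Ioo (0:ℝ) τ, ∀ j, matL B η (A ^ k) j (E A u) = 0 := by
    intro k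
    induction k with
    | zero =>
      intro u hu j
      have h1 : τ - (τ - u) = u := by ring
      have := congrFun (hzero (τ - u) ⟨by linarith [hu.2], by linarith [hu.1]⟩) j
      simpa [hgbar, h1, pow_zero] using this
    | succ k ih =>
      intro u hu j
      have hderiv : HasDerivAt (fun w => matL B η (A ^ k) j (E A w))
          (matL B η (A ^ k) j (A * E A u)) u :=
        (matL B η (A ^ k) j).hasFDerivAt.comp_hasDerivAt u (E_hasDerivAt A u)
      have hev : (fun w => matL B η (A ^ k) j (E A w)) =ᶠ[nhds u] fun _ => (0:ℝ) := by
        filter_upwards [Ioo_mem_nhds hu.1 hu.2] with w hw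
        exact ih w hw j
      have hderiv0 : HasDerivAt (fun _ : ℝ => (0:ℝ)) (matL B η (A ^ k) j (A * E A u)) u :=
        hderiv.congr_of_eventuallyEq hev.symm
      have hD := hderiv0.unique (hasDerivAt_const u 0)
      have harr : (A ^ k) * (A * E A u) = (A ^ (k+1)) * E A u := by
        rw [pow_succ, Matrix.mul_assoc]
      calc matL B η (A ^ (k+1)) j (E A u)
          = matL B η (A ^ k) j (A * E A u) := by simp [matL_apply, harr]
        _ = 0 := hD.symm ▸ rfl
  -- evaluate at u₀ and remove the exponential
  set u₀ : ℝ := τ / 2 with hu₀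
  have hu₀mem : u₀ ∈ Set.Ioo (0:ℝ) τ := ⟨by positivity, by linarith⟩
  have hfin : ∀ (k : ℕ) (j : Fin m), ((η ᵥ* (A ^ k * B))) j = 0 := by
    intro k j
    have hψn : ∀ n : ℕ, matL B η (A ^ k * E A u₀) j (A ^ n) = 0 := by
      intro n
      have h1 : (A ^ k * E A u₀) * A ^ n = A ^ (k + n) * E A u₀ := by
        rw [Matrix.mul_assoc, ((E_commute A u₀).symm.pow_right n).eq, ← Matrix.mul_assoc,
          ← pow_add]
      rw [matL_apply, h1, ← matL_apply B η (A ^ (k+n)) j (E A u₀)]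
      exact hG (k + n) u₀ hu₀mem j
    have hsum : matL B η (A ^ k * E A u₀) j (exp (-(u₀ • A))) = 0 := by
      rw [exp_eq_tsum ℝ]
      rw [(matL B η (A ^ k * E A u₀) j).map_tsum (expSeries_summable' (𝕂 := ℝ) (-(u₀ • A)))]
      have : ∀ n : ℕ, matL B η (A ^ k * E A u₀) j ((n.factorial⁻¹ : ℝ) • (-(u₀ • A)) ^ n) = 0 := by
        intro n
        have h2 : (-(u₀ • A)) ^ n = (-u₀) ^ n • A ^ n := by
          rw [← neg_smul, smul_pow]
        rw [h2, _root_.map_smul, _root_.map_smul, hψn n]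
        simp
      rw [tsum_congr this]
      simp
    have hEneg : E A u₀ * exp (-(u₀ • A)) = 1 := by
      have := E_mul_neg A u₀
      rwa [show E A (-u₀) = exp (-(u₀ • A)) by rw [E, neg_smul]] at this
    rw [matL_apply, Matrix.mul_assoc, hEneg, Matrix.mul_one] at hsum
    rw [Matrix.vecMul_vecMul] at hsum
    exact hsum
  -- use the Kalman rank condition
  have hker : ∀ x : Fin d → ℝ, lmDot η x = 0 := by
    have hsub : {v : Fin d → ℝ | ∃ (k : ℕ) (j : Fin m), k < d ∧ v = fun i => ((A ^ k) * B) i j}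
        ⊆ (LinearMap.ker (lmDot η) : Set (Fin d → ℝ)) := by
      rintro v ⟨k, j, _, rfl⟩
      have : η ⬝ᵥ (fun i => (A ^ k * B) i j) = ((η ᵥ* (A ^ k * B))) j := by
        simp [Matrix.vecMul, dotProduct]
      simpa [LinearMap.mem_ker, lmDot, this] using hfin k j
    have hle := Submodule.span_le.2 hsub
    have htop : Submodule.span ℝ
        {v : Fin d → ℝ | ∃ (k : ℕ) (j : Fin m), k < d ∧ v = fun i => ((A ^ k) * B) i j} = ⊤ :=
      hKal
    rw [htop] at hle
    intro x
    exact (LinearMap.mem_ker).1 (hle (Submodule.mem_top))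
  funext i
  have := hker (Pi.single i 1)
  simpa [lmDot, dotProduct_single] using this


lemma mulVec_norm_bound {k l : ℕ} (M : Matrix (Fin k) (Fin l) ℝ) :
    ∃ c : ℝ, 0 ≤ c ∧ ∀ v : Fin l → ℝ, ‖M.mulVec v‖ ≤ c * ‖v‖ :=
  ⟨‖M‖, norm_nonneg M, fun v => Matrix.linfty_opNorm_mulVec M v⟩

lemma intg_cont (t : ℝ) {v : ℝ → Fin m → ℝ} (hv : Continuous v) :
    Continuous (intg A B t v) :=
  Continuous.matrix_mulVec ((E_cont A).comp (continuous_const.sub continuous_id))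
    (Continuous.matrix_mulVec continuous_const hv)

lemma intg_II_cont (t : ℝ) {v : ℝ → Fin m → ℝ} (hv : Continuous v) (a b : ℝ) :
    IntervalIntegrable (intg A B t v) MeasureTheory.volume a b :=
  (intg_cont A B t hv).intervalIntegrable a b

lemma mulVec_finsum {k l : ℕ} (M : Matrix (Fin k) (Fin l) ℝ) {ι : Type*} (s : Finset ι)
    (g : ι → Fin l → ℝ) : M.mulVec (∑ i ∈ s, g i) = ∑ i ∈ s, M.mulVec (g i) := by
  have h := map_sum M.mulVecLin g s
  simpa only [Matrix.mulVecLin_apply] using h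

lemma intg_finsum (t : ℝ) {ι : Type*} (s : Finset ι) (c : ι → ℝ) (v : ι → ℝ → Fin m → ℝ)
    (r : ℝ) :
    intg A B t (fun u => ∑ i ∈ s, c i • v i u) r = ∑ i ∈ s, c i • intg A B t (v i) r := by
  unfold intg
  rw [mulVec_finsum, mulVec_finsum]
  congr 1
  · funext i
    rw [Matrix.mulVec_smul, Matrix.mulVec_smul]

lemma reach_surj (hKal : KalmanRank A B) {τ : ℝ} (hτ : 0 < τ) (w : Fin d → ℝ) :
    ∃ v : ℝ → Fin m → ℝ, Continuous v ∧ (∫ s in (0:ℝ)..τ, intg A B τ v s) = w := by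
  classical
  set V : Submodule ℝ (Fin d → ℝ) :=
    { carrier := {w | ∃ v : ℝ → Fin m → ℝ, Continuous v ∧
        (∫ s in (0:ℝ)..τ, intg A B τ v s) = w}
      add_mem' := by
        rintro a b ⟨v1, hv1, rfl⟩ ⟨v2, hv2, rfl⟩
        refine ⟨fun s => v1 s + v2 s, hv1.add hv2, ?_⟩
        have hptw : ∀ s, intg A B τ (fun u => v1 u + v2 u) s
            = intg A B τ v1 s + intg A B τ v2 s := by
          intro s; simp [intg, Matrix.mulVec_add]
        rw [show (∫ s in (0:ℝ)..τ, intg A B τ (fun u => v1 u + v2 u) s)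
            = ∫ s in (0:ℝ)..τ, (intg A B τ v1 s + intg A B τ v2 s) from
            intervalIntegral.integral_congr fun s _ => hptw s]
        exact intervalIntegral.integral_add (intg_II_cont A B τ hv1 0 τ)
          (intg_II_cont A B τ hv2 0 τ)
      zero_mem' := by
        refine ⟨fun _ => 0, continuous_const, ?_⟩
        have : ∀ s : ℝ, intg A B τ (fun _ => (0 : Fin m → ℝ)) s = 0 := by
          intro s; simp [intg]
        rw [show (∫ s in (0:ℝ)..τ, intg A B τ (fun _ => (0 : Fin m → ℝ)) s)
            = ∫ s in (0:ℝ)..τ, (0 : Fin d → ℝ) from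
            intervalIntegral.integral_congr fun s _ => this s]
        simp
      smul_mem' := by
        rintro c a ⟨v1, hv1, rfl⟩
        refine ⟨fun s => c • v1 s, hv1.const_smul c, ?_⟩
        have hptw : ∀ s, intg A B τ (fun u => c • v1 u) s = c • intg A B τ v1 s := by
          intro s; simp [intg, Matrix.mulVec_smul]
        rw [show (∫ s in (0:ℝ)..τ, intg A B τ (fun u => c • v1 u) s)
            = ∫ s in (0:ℝ)..τ, c • intg A B τ v1 s from
            intervalIntegral.integral_congr fun s _ => hptw s,
          intervalIntegral.integral_smul] }
  have hVtop : V = ⊤ := by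
    by_contra hne
    obtain ⟨f, hf0, hfbot⟩ := Submodule.exists_dual_map_eq_bot_of_lt_top
      (lt_top_iff_ne_top.2 hne) inferInstance
    set η : Fin d → ℝ := fun i => f (Pi.single i 1) with hηdef
    have hrep : ∀ x : Fin d → ℝ, f x = η ⬝ᵥ x := by
      intro x
      have hx : x = ∑ i, x i • (Pi.single i (1:ℝ) : Fin d → ℝ) := by
        funext j
        simp [Finset.sum_apply, Pi.single_apply, mul_ite]
      calc f x = f (∑ i, x i • (Pi.single i (1:ℝ) : Fin d → ℝ)) := by rw [← hx]
        _ = ∑ i, x i * f (Pi.single i 1) := by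
            rw [map_sum]
            exact Finset.sum_congr rfl fun i _ => by rw [_root_.map_smul, smul_eq_mul]
        _ = η ⬝ᵥ x := by
            rw [dotProduct]
            exact Finset.sum_congr rfl fun i _ => mul_comm _ _
    have hη0 : η = 0 := by
      refine eta_zero A B hKal hτ η fun v hv => ?_
      have hmem : (∫ s in (0:ℝ)..τ, intg A B τ v s) ∈ V := ⟨v, hv, rfl⟩
      have hmap : f (∫ s in (0:ℝ)..τ, intg A B τ v s) ∈ V.map f :=
        Submodule.mem_map_of_mem hmem
      rw [hfbot] at hmap
      have h0 : f (∫ s in (0:ℝ)..τ, intg A B τ v s) = 0 := Submodule.mem_bot ℝ |>.1 hmap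
      rw [hrep] at h0
      exact h0
    apply hf0
    refine LinearMap.ext fun x => ?_
    rw [hrep, hη0]
    simp [zero_dotProduct]
  have hw : w ∈ V := by rw [hVtop]; exact Submodule.mem_top
  exact hw

lemma reach_surj_bound (hKal : KalmanRank A B) {τ : ℝ} (hτ : 0 < τ) :
    ∃ M : ℝ, 0 ≤ M ∧ ∀ w : Fin d → ℝ, ∃ v : ℝ → Fin m → ℝ, Continuous v ∧
      (∫ s in (0:ℝ)..τ, intg A B τ v s) = w ∧
      ∀ s ∈ Set.Icc (0:ℝ) τ, ‖v s‖ ≤ M * ‖w‖ := by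
  classical
  choose vb hvbc hvbI using fun i : Fin d => reach_surj A B hKal hτ (Pi.single i 1)
  have hbd : ∀ i : Fin d, ∃ Ci : ℝ, ∀ s ∈ Set.Icc (0:ℝ) τ, ‖vb i s‖ ≤ Ci := fun i =>
    (isCompact_Icc).exists_bound_of_continuousOn (hvbc i).continuousOn
  choose Ci hCi using hbd
  refine ⟨∑ i, max (Ci i) 0, Finset.sum_nonneg fun i _ => le_max_right _ _, fun w => ?_⟩
  refine ⟨fun s => ∑ i, w i • vb i s,
    continuous_finset_sum _ fun i _ => (hvbc i).const_smul (w i), ?_, ?_⟩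
  · rw [show (∫ s in (0:ℝ)..τ, intg A B τ (fun u => ∑ i, w i • vb i u) s)
        = ∫ s in (0:ℝ)..τ, ∑ i, w i • intg A B τ (vb i) s from
        intervalIntegral.integral_congr fun s _ => intg_finsum A B τ Finset.univ w vb s,
      intervalIntegral.integral_finset_sum (f := fun i s => w i • intg A B τ (vb i) s)
        fun i _ => (intg_II_cont A B τ (hvbc i) 0 τ).smul (w i)]
    have : ∀ i : Fin d, (∫ s in (0:ℝ)..τ, w i • intg A B τ (vb i) s)
        = w i • (Pi.single i (1:ℝ) : Fin d → ℝ) := by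
      intro i
      rw [intervalIntegral.integral_smul, hvbI i]
    rw [Finset.sum_congr rfl fun i _ => this i]
    funext j
    simp [Finset.sum_apply, Pi.single_apply, mul_ite]
  · intro s hs
    calc ‖∑ i, w i • vb i s‖ ≤ ∑ i, ‖w i • vb i s‖ := norm_sum_le _ _
      _ ≤ ∑ i, ‖w‖ * max (Ci i) 0 := by
          refine Finset.sum_le_sum fun i _ => ?_
          rw [norm_smul]
          have h1 : ‖w i‖ ≤ ‖w‖ := norm_le_pi_norm w i
          have h2 : ‖vb i s‖ ≤ max (Ci i) 0 := (hCi i s hs).trans (le_max_left _ _)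
          exact mul_le_mul h1 h2 (norm_nonneg _) (norm_nonneg _)
      _ = (∑ i, max (Ci i) 0) * ‖w‖ := by rw [← Finset.mul_sum, mul_comm]

lemma shift_admissible {U : Set (Fin m → ℝ)} (c : ℝ) {ω : ℝ → Fin m → ℝ}
    (h : IsAdmissibleControl U ω) : IsAdmissibleControl U (fun s => ω (s + c)) :=
  ⟨h.1.comp (measurable_add_const c), ae_shift c h.2⟩

lemma reach_trans {U : Set (Fin m → ℝ)} (hUb : Bornology.IsBounded U)
    {x y z : Fin d → ℝ} {s r : ℝ} (hs : 0 ≤ s) (hr : 0 ≤ r)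
    {ωa ωb : ℝ → Fin m → ℝ} (ha : IsAdmissibleControl U ωa) (hb : IsAdmissibleControl U ωb)
    (hy : linSol A B s x ωa = y) (hz : linSol A B r y ωb = z) :
    IsAdmissibleControl U (concat s ωa ωb) ∧
      linSol A B (s + r) x (concat s ωa ωb) = z := by
  have hadm := concat_admissible s ha hb
  refine ⟨hadm, ?_⟩
  rw [concat_sol_right A B (bdd_of_admissible hUb hadm) hs x r hr, hy, hz]
end CP

/-- If `(A,B)` is controllable, `U` is a compact neighborhood of the origin, `ω₁` is a
`T₀`-periodic admissible control with values a.e. in a compact subset of the interior of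
`U`, and `x₁` is a fixed point of the time-`T₀` map along `ω₁`, then there is a control
set `D` with `x₁ ∈ int D` whose interior contains the whole periodic trajectory. -/
theorem periodic_trajectory_in_interior_of_control_set {d m : ℕ}
    (A : Matrix (Fin d) (Fin d) ℝ) (B : Matrix (Fin d) (Fin m) ℝ)
    (hKal : KalmanRank A B) (U : Set (Fin m → ℝ)) (hUc : IsCompact U)
    (hU0 : U ∈ 𝓝 (0 : Fin m → ℝ)) (T₀ : ℝ) (hT₀ : 0 < T₀)
    (ω₁ : ℝ → Fin m → ℝ) (hadm : IsAdmissibleControl U ω₁)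
    (hper : ∀ t : ℝ, ω₁ (t + T₀) = ω₁ t)
    (hint : ∃ C : Set (Fin m → ℝ), IsCompact C ∧ C ⊆ interior U ∧ ∀ᵐ t : ℝ, ω₁ t ∈ C)
    (x₁ : Fin d → ℝ) (hx₁ : linSol A B T₀ x₁ ω₁ = x₁) :
    ∃ D : Set (Fin d → ℝ), IsControlSet A B U D ∧ x₁ ∈ interior D ∧
      ∀ t : ℝ, linSol A B t x₁ ω₁ ∈ interior D := by

  classical
  obtain ⟨C, hCcomp, hCsub, hCae⟩ := hint
  have hUbdd : Bornology.IsBounded U := hUc.isBounded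
  have hbddω₁ : CP.Bdd ω₁ := CP.bdd_of_admissible hUbdd hadm
  -- safety margin around C
  obtain ⟨ρ, hρpos, hρsub⟩ := hCcomp.exists_thickening_subset_open isOpen_interior hCsub
  have hρU : ∀ c ∈ C, ∀ u : Fin m → ℝ, dist u c < ρ → u ∈ U := by
    intro c hc u hu
    exact interior_subset (hρsub (Metric.mem_thickening_iff.2 ⟨c, hc, hu⟩))
  have hC_U : C ⊆ U := fun c hc => interior_subset (hCsub hc)
  -- the periodic trajectory
  set p : ℝ → Fin d → ℝ := fun t => linSol A B t x₁ ω₁ with hpdef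
  have hp0 : p 0 = x₁ := CP.linSol_zero A B x₁ ω₁
  have hshift : (fun u : ℝ => ω₁ (u + T₀)) = ω₁ := funext fun u => hper u
  have key : ∀ a b : ℝ, p (a + b) = linSol A B b (p a) (fun s => ω₁ (s + a)) :=
    fun a b => CP.linSol_cocycle A B hbddω₁ a b x₁
  have hpT : p T₀ = x₁ := hx₁
  have hp_per : ∀ t : ℝ, p (t + T₀) = p t := by
    intro t
    have h1 := key T₀ t
    rw [hpT, hshift] at h1
    rw [add_comm t T₀]
    exact h1
  have hZ : ∀ (n : ℤ) (t : ℝ), p (t + (n : ℝ) * T₀) = p t := by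
    intro n
    induction n using Int.induction_on with
    | zero => intro t; simp
    | succ k ih =>
      intro t
      have he : t + ((k + 1 : ℤ) : ℝ) * T₀ = (t + ((k : ℤ) : ℝ) * T₀) + T₀ := by push_cast; ring
      rw [he, hp_per, ih t]
    | pred k ih =>
      intro t
      have he : t + ((-k - 1 : ℤ) : ℝ) * T₀ = (t - T₀) + ((-k : ℤ) : ℝ) * T₀ := by
        push_cast; ring
      have h2 : p (t - T₀) = p t := by
        have h3 := hp_per (t - T₀)
        rw [sub_add_cancel] at h3
        exact h3.symm
      rw [he, ih (t - T₀), h2]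
  -- loop from any phase back to x₁
  have hploop : ∀ τ₁ : ℝ, 0 ≤ τ₁ →
      linSol A B (2 * T₀ - τ₁) (p τ₁) (fun s => ω₁ (s + τ₁)) = x₁ := by
    intro τ₁ hτ₁
    have h1 := key τ₁ (2 * T₀ - τ₁)
    have he : τ₁ + (2 * T₀ - τ₁) = 0 + ((2 : ℤ) : ℝ) * T₀ := by push_cast; ring
    rw [he] at h1
    rw [← h1, hZ 2 0, hp0]
  -- the core set D₀
  set D₀ : Set (Fin d → ℝ) := {y | (∃ s > (0:ℝ), ∃ ω, IsAdmissibleControl U ω ∧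
      y = linSol A B s x₁ ω) ∧ (∃ s > (0:ℝ), ∃ ω, IsAdmissibleControl U ω ∧
      linSol A B s y ω = x₁)} with hD₀def
  have hx₁D₀ : x₁ ∈ D₀ := by
    constructor
    · exact ⟨T₀, hT₀, ω₁, hadm, hx₁.symm⟩
    · exact ⟨T₀, hT₀, ω₁, hadm, hx₁⟩
  -- the periodic trajectory stays in D₀
  have htraj : ∀ u : ℝ, 0 ≤ u → p u ∈ D₀ := by
    intro u hu
    constructor
    · rcases eq_or_lt_of_le hu with h | h
      · rw [← h, hp0]; exact hx₁D₀.1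
      · exact ⟨u, h, ω₁, hadm, rfl⟩
    · -- return to x₁ along the periodic control
      set n : ℤ := ⌊u / T₀⌋ + 1 with hn
      have hlt : u < (n : ℝ) * T₀ := by
        have := Int.lt_floor_add_one (u / T₀)
        have h4 : u / T₀ < (n : ℝ) := by rw [hn]; push_cast; linarith
        calc u = (u / T₀) * T₀ := by field_simp
          _ < (n : ℝ) * T₀ := by exact mul_lt_mul_of_pos_right h4 hT₀
      refine ⟨(n : ℝ) * T₀ - u, by linarith, fun s => ω₁ (s + u),
        CP.shift_admissible u hadm, ?_⟩
      have h1 := key u ((n : ℝ) * T₀ - u)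
      have he : u + ((n : ℝ) * T₀ - u) = 0 + (n : ℝ) * T₀ := by ring
      rw [he] at h1
      rw [← h1, hZ n 0, hp0]
  -- property (i) for D₀
  have hprop1 : ∀ x ∈ D₀, ∃ ω, IsAdmissibleControl U ω ∧
      ∀ t ≥ (0:ℝ), linSol A B t x ω ∈ D₀ := by
    rintro y ⟨⟨r, hr, ωb, hωb, hyb⟩, ⟨s, hs, ωa, hωa, hya⟩⟩
    refine ⟨CP.concat s ωa ω₁, CP.concat_admissible s hωa hadm, ?_⟩
    intro t ht
    rcases le_or_gt t s with hts | hst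
    · -- before reaching x₁
      have hz : linSol A B t y (CP.concat s ωa ω₁) = linSol A B t y ωa :=
        CP.concat_sol_left A B hs.le y t ht hts
      rw [hz]
      constructor
      · -- reachable from x₁ via ωb then ωa
        obtain ⟨hadm2, heq2⟩ := CP.reach_trans A B hUbdd hr.le ht hωb hωa hyb.symm rfl
        exact ⟨r + t, by linarith, CP.concat r ωb ωa, hadm2, heq2.symm⟩
      · -- can return to x₁
        rcases eq_or_lt_of_le hts with h | h
        · rw [h, hya]
          exact ⟨T₀, hT₀, ω₁, hadm, hx₁⟩
        · refine ⟨s - t, by linarith, fun u => ωa (u + t), CP.shift_admissible t hωa, ?_⟩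
          have hc := CP.linSol_cocycle A B (CP.bdd_of_admissible hUbdd hωa) t (s - t) y
          have he : t + (s - t) = s := by ring
          rw [he] at hc
          rw [← hc, hya]
    · -- after reaching x₁, follow the periodic control
      have hc := CP.concat_sol_right A B
        (CP.bdd_of_admissible hUbdd (CP.concat_admissible s hωa hadm)) hs.le y (t - s)
        (by linarith)
      rw [hya] at hc
      have he : s + (t - s) = t := by ring
      rw [he] at hc
      rw [hc]
      exact htraj (t - s) (by linarith)
  -- property (ii) for D₀
  have hprop2 : ∀ x ∈ D₀, D₀ ⊆ closure {y | ∃ s > (0:ℝ), ∃ ω, IsAdmissibleControl U ω ∧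
      y = linSol A B s x ω} := by
    rintro x ⟨_, ⟨s, hs, ωa, hωa, hxa⟩⟩ y hy
    obtain ⟨⟨r, hr, ωb, hωb, hyb⟩, _⟩ := hy
    refine subset_closure ?_
    obtain ⟨hadm2, heq2⟩ := CP.reach_trans A B hUbdd hs.le hr.le hωa hωb hxa hyb.symm
    exact ⟨s + r, by linarith, CP.concat s ωa ωb, hadm2, heq2.symm⟩
  -- Zorn's lemma: a maximal set containing D₀
  set Scoll : Set (Set (Fin d → ℝ)) := {E | D₀ ⊆ E ∧
    (∀ x ∈ E, ∃ ω, IsAdmissibleControl U ω ∧ ∀ t ≥ (0:ℝ), linSol A B t x ω ∈ E) ∧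
    (∀ x ∈ E, E ⊆ closure {y | ∃ s > (0:ℝ), ∃ ω, IsAdmissibleControl U ω ∧
      y = linSol A B s x ω})} with hScoll
  have hD₀S : D₀ ∈ Scoll := ⟨subset_rfl, hprop1, hprop2⟩
  have hchain : ∀ c ⊆ Scoll, IsChain (· ⊆ ·) c → c.Nonempty →
      ∃ ub ∈ Scoll, ∀ s ∈ c, s ⊆ ub := by
    rintro c hcS hch ⟨E₀, hE₀⟩
    refine ⟨⋃₀ c, ⟨?_, ?_, ?_⟩, fun s hs => Set.subset_sUnion_of_mem hs⟩
    · exact (hcS hE₀).1.trans (Set.subset_sUnion_of_mem hE₀)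
    · rintro x ⟨E, hEc, hxE⟩
      obtain ⟨ω, hω, hωt⟩ := (hcS hEc).2.1 x hxE
      exact ⟨ω, hω, fun t ht => (Set.subset_sUnion_of_mem hEc) (hωt t ht)⟩
    · rintro x ⟨E, hEc, hxE⟩ y ⟨F, hFc, hyF⟩
      rcases hch.total hEc hFc with h | h
      · exact (hcS hFc).2.2 x (h hxE) hyF
      · exact (hcS hEc).2.2 x hxE (h hyF)
  obtain ⟨D, hD₀D, hDmax⟩ := zorn_subset_nonempty Scoll hchain D₀ hD₀S
  have hDS : D ∈ Scoll := hDmax.1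
  -- the local controllability balls
  have hball : ∀ t : ℝ, ∃ ε > (0:ℝ), Metric.ball (p t) ε ⊆ D₀ := by
    intro t
    set t' : ℝ := t - (⌊t / T₀⌋ : ℝ) * T₀ with ht'def
    have ht'0 : 0 ≤ t' := Int.sub_floor_div_mul_nonneg t hT₀
    have ht'T : t' < T₀ := Int.sub_floor_div_mul_lt t hT₀
    have hpt' : p t' = p t := by
      have h1 := hZ ⌊t / T₀⌋ t'
      have h2 : t' + (⌊t / T₀⌋ : ℝ) * T₀ = t := by rw [ht'def]; ring
      rw [h2] at h1
      exact h1.symm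
    set τ₁ : ℝ := if t' = 0 then T₀ else t' with hτ₁def
    have hτ₁pos : 0 < τ₁ := by
      rw [hτ₁def]; split_ifs with h
      · exact hT₀
      · exact lt_of_le_of_ne ht'0 (Ne.symm h)
    have hpτ₁ : p τ₁ = p t := by
      rw [hτ₁def]; split_ifs with h
      · rw [hpT, ← hp0, ← h, hpt']
      · exact hpt'
    set τ₂ : ℝ := 2 * T₀ - τ₁ with hτ₂def
    have hτ₂pos : 0 < τ₂ := by
      rw [hτ₂def]
      have : τ₁ ≤ T₀ := by
        rw [hτ₁def]; split_ifs with h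
        · exact le_rfl
        · exact ht'T.le
      linarith
    obtain ⟨M₁, hM₁0, hM₁⟩ := CP.reach_surj_bound A B hKal hτ₁pos
    obtain ⟨M₂, hM₂0, hM₂⟩ := CP.reach_surj_bound A B hKal hτ₂pos
    obtain ⟨cE, hcE0, hcE⟩ := CP.mulVec_norm_bound (CP.E A τ₂)
    set K : ℝ := M₁ + M₂ * cE + 1 with hKdef
    have hKpos : 0 < K := by positivity
    refine ⟨ρ / K, by positivity, ?_⟩
    intro y hy
    set q : Fin d → ℝ := p t with hqdef
    have hδ : ‖y - q‖ < ρ / K := by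
      rw [← dist_eq_norm]
      exact hy
    have hKρ : K * ‖y - q‖ < ρ := by
      have h2 : K * ‖y - q‖ < K * (ρ / K) := mul_lt_mul_of_pos_left hδ hKpos
      have h3 : K * (ρ / K) = ρ := by
        rw [mul_comm]; exact div_mul_cancel₀ ρ hKpos.ne'
      exact lt_of_lt_of_eq h2 h3
    have hδρ₁ : M₁ * ‖y - q‖ < ρ := by
      have h1 : M₁ * ‖y - q‖ ≤ K * ‖y - q‖ := by
        refine mul_le_mul_of_nonneg_right ?_ (norm_nonneg _)
        have := mul_nonneg hM₂0 hcE0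
        rw [hKdef]; linarith
      linarith
    have hδρ₂ : M₂ * (cE * ‖y - q‖) < ρ := by
      have h1 : M₂ * (cE * ‖y - q‖) ≤ K * ‖y - q‖ := by
        rw [← mul_assoc]
        refine mul_le_mul_of_nonneg_right ?_ (norm_nonneg _)
        rw [hKdef]; linarith
      linarith
    -- leg 1 : from x₁ to y
    obtain ⟨v, hvc, hvI, hvb⟩ := hM₁ (y - q)
    set vtr : ℝ → Fin m → ℝ := fun s => if s ∈ Set.Icc (0:ℝ) τ₁ then v s else 0 with hvtrdef
    have hvtrmeas : Measurable vtr :=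
      Measurable.ite measurableSet_Icc hvc.measurable measurable_const
    have hvtrbd : ∀ s, ‖vtr s‖ ≤ max (M₁ * ‖y - q‖) 0 := by
      intro s
      rw [hvtrdef]
      by_cases h : s ∈ Set.Icc (0:ℝ) τ₁
      · simp only [h, if_true]
        exact le_max_of_le_left (hvb s h)
      · simp only [h, if_false]
        simp
    have hvtrBdd : CP.Bdd vtr := ⟨hvtrmeas, _, Filter.Eventually.of_forall hvtrbd⟩
    set ωA : ℝ → Fin m → ℝ := fun s => ω₁ s + vtr s with hωAdef
    have hωAadm : IsAdmissibleControl U ωA := by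
      refine ⟨hadm.1.add hvtrmeas, ?_⟩
      filter_upwards [hCae] with s hs
      rw [hωAdef]
      simp only
      by_cases h : s ∈ Set.Icc (0:ℝ) τ₁
      · refine hρU (ω₁ s) hs _ ?_
        have hd : dist (ω₁ s + vtr s) (ω₁ s) = ‖vtr s‖ := by
          rw [dist_eq_norm]
          simp
        rw [hd, hvtrdef]
        simp only [h, if_true]
        exact lt_of_le_of_lt (hvb s h) hδρ₁
      · have h0 : vtr s = 0 := by rw [hvtrdef]; simp only [h, if_false]
        rw [h0, add_zero]
        exact hC_U hs
    have hreach1 : linSol A B τ₁ x₁ ωA = y := by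
      have hadd := CP.linSol_add_control A B τ₁ x₁ hbddω₁ hvtrBdd
      have hIeq : (∫ s in (0:ℝ)..τ₁, CP.intg A B τ₁ vtr s)
          = ∫ s in (0:ℝ)..τ₁, CP.intg A B τ₁ v s := by
        refine intervalIntegral.integral_congr fun s hs => ?_
        have hs' : s ∈ Set.Icc (0:ℝ) τ₁ := by rwa [Set.uIcc_of_le hτ₁pos.le] at hs
        rw [CP.intg, CP.intg, hvtrdef]
        simp only [hs', if_true]
      have hτ₁q : linSol A B τ₁ x₁ ω₁ = q := hpτ₁
      rw [hωAdef, hadd, hIeq, hvI, hτ₁q, add_sub_cancel]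
    -- leg 2 : from y back to x₁
    set w₂ : Fin d → ℝ := -(CP.E A τ₂).mulVec (y - q) with hw₂def
    obtain ⟨v₂, hv₂c, hv₂I, hv₂b⟩ := hM₂ w₂
    have hw₂n : ‖w₂‖ ≤ cE * ‖y - q‖ := by
      rw [hw₂def, norm_neg]
      exact hcE _
    have hv₂ρ : ∀ s ∈ Set.Icc (0:ℝ) τ₂, ‖v₂ s‖ < ρ := by
      intro s hs
      calc ‖v₂ s‖ ≤ M₂ * ‖w₂‖ := hv₂b s hs
        _ ≤ M₂ * (cE * ‖y - q‖) := mul_le_mul_of_nonneg_left hw₂n hM₂0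
        _ < ρ := hδρ₂
    set vtr2 : ℝ → Fin m → ℝ := fun s => if s ∈ Set.Icc (0:ℝ) τ₂ then v₂ s else 0 with hvtr2def
    have hvtr2meas : Measurable vtr2 :=
      Measurable.ite measurableSet_Icc hv₂c.measurable measurable_const
    have hvtr2bd : ∀ s, ‖vtr2 s‖ ≤ max (M₂ * ‖w₂‖) 0 := by
      intro s
      rw [hvtr2def]
      by_cases h : s ∈ Set.Icc (0:ℝ) τ₂
      · simp only [h, if_true]
        exact le_max_of_le_left (hv₂b s h)
      · simp only [h, if_false]; simp
    have hvtr2Bdd : CP.Bdd vtr2 := ⟨hvtr2meas, _, Filter.Eventually.of_forall hvtr2bd⟩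
    set ω₁τ : ℝ → Fin m → ℝ := fun s => ω₁ (s + τ₁) with hω₁τdef
    have hω₁τadm : IsAdmissibleControl U ω₁τ := CP.shift_admissible τ₁ hadm
    have hω₁τBdd : CP.Bdd ω₁τ := CP.bdd_of_admissible hUbdd hω₁τadm
    have hCaeτ : ∀ᵐ s : ℝ, ω₁ (s + τ₁) ∈ C := CP.ae_shift τ₁ hCae
    set ωB : ℝ → Fin m → ℝ := fun s => ω₁τ s + vtr2 s with hωBdef
    have hωBadm : IsAdmissibleControl U ωB := by
      refine ⟨hω₁τadm.1.add hvtr2meas, ?_⟩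
      filter_upwards [hCaeτ] with s hs
      rw [hωBdef]
      simp only
      by_cases h : s ∈ Set.Icc (0:ℝ) τ₂
      · refine hρU (ω₁ (s + τ₁)) hs _ ?_
        have hd : dist (ω₁τ s + vtr2 s) (ω₁ (s + τ₁)) = ‖vtr2 s‖ := by
          rw [hω₁τdef, dist_eq_norm]
          simp
        rw [hd, hvtr2def]
        simp only [h, if_true]
        exact hv₂ρ s h
      · have h0 : vtr2 s = 0 := by rw [hvtr2def]; simp only [h, if_false]
        rw [h0, add_zero, hω₁τdef]
        exact hC_U hs
    have hreach2 : linSol A B τ₂ y ωB = x₁ := by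
      have hadd := CP.linSol_add_control A B τ₂ y hω₁τBdd hvtr2Bdd
      have hIeq : (∫ s in (0:ℝ)..τ₂, CP.intg A B τ₂ vtr2 s)
          = ∫ s in (0:ℝ)..τ₂, CP.intg A B τ₂ v₂ s := by
        refine intervalIntegral.integral_congr fun s hs => ?_
        have hs' : s ∈ Set.Icc (0:ℝ) τ₂ := by rwa [Set.uIcc_of_le hτ₂pos.le] at hs
        rw [CP.intg, CP.intg, hvtr2def]
        simp only [hs', if_true]
      have hsx := CP.linSol_shift_x A B τ₂ y q ω₁τ
      have hlp : linSol A B τ₂ q ω₁τ = x₁ := by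
        rw [hτ₂def, hω₁τdef, ← hpτ₁]
        exact hploop τ₁ hτ₁pos.le
      rw [hωBdef, hadd, hIeq, hv₂I, hsx, hlp, hw₂def]
      abel
    exact ⟨⟨τ₁, hτ₁pos, ωA, hωAadm, hreach1.symm⟩, ⟨τ₂, hτ₂pos, ωB, hωBadm, hreach2⟩⟩
  -- conclusion
  have hmemint : ∀ t : ℝ, p t ∈ interior D := by
    intro t
    obtain ⟨ε, hε, hsub⟩ := hball t
    exact mem_interior.2 ⟨Metric.ball (p t) ε, hsub.trans hDS.1, Metric.isOpen_ball,
      Metric.mem_ball_self hε⟩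
  refine ⟨D, ⟨⟨hDS.2.1, hDS.2.2⟩, ?_⟩, ?_, hmemint⟩
  · intro D' hDD' hD'props
    have hD'S : D' ∈ Scoll := ⟨hDS.1.trans hDD', hD'props.1, hD'props.2⟩
    exact subset_antisymm (hDmax.2 hD'S hDD') hDD'
  · have h0 := hmemint 0
    rwa [hp0] at h0


end
end

section
/- Assume the pair (A,B) satisfies the Kalman rank condition (the columns of B, AB, …, A^{d−1}B span ℝ^d) and that U is a compact neighborhood of the origin in ℝ^m. Let D be a control set with nonempty interior, let K₁ and K₂ be compact sets with nonempty interior contained in D, and let Q ⊇ D. Then (K₁,Q) and (K₂,Q) are admissible pairs and P_inv(f,K₁,Q) = P_inv(f,K₂,Q) for every continuous potential f : U → ℝ. -/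
open MeasureTheory Filter Topology ENNReal
open scoped ENNReal

noncomputable section

open NormedSpace

variable {d m : ℕ} (A : Matrix (Fin d) (Fin d) ℝ) (B : Matrix (Fin d) (Fin m) ℝ)
  {U : Set (Fin m → ℝ)}

lemma exp_add_smul (s t : ℝ) :
    exp ((s + t) • A) = exp (s • A) * exp (t • A) := by
  rw [add_smul]
  exact Matrix.exp_add_of_commute _ _ ((Commute.refl A).smul_left s |>.smul_right t)

lemma exp_zero_smul : exp ((0:ℝ) • A) = 1 := by
  rw [zero_smul]; exact NormedSpace.exp_zero

lemma continuous_exp_smul : Continuous fun t : ℝ => exp (t • A) := by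
  letI : SeminormedRing (Matrix (Fin d) (Fin d) ℝ) := Matrix.linftyOpSemiNormedRing
  letI : NormedRing (Matrix (Fin d) (Fin d) ℝ) := Matrix.linftyOpNormedRing
  letI : NormedAlgebra ℝ (Matrix (Fin d) (Fin d) ℝ) := Matrix.linftyOpNormedAlgebra
  letI : NormedAlgebra ℚ (Matrix (Fin d) (Fin d) ℝ) := Matrix.linftyOpNormedAlgebra
  exact exp_continuous.comp (continuous_id.smul continuous_const)

/-- `mulVec` of `exp (u • A)` as a continuous linear map. -/
def expL (u : ℝ) : (Fin d → ℝ) →L[ℝ] (Fin d → ℝ) :=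
  LinearMap.toContinuousLinearMap (exp (u • A)).mulVecLin

/-- `B.mulVec` as a continuous linear map. -/
def bL : (Fin m → ℝ) →L[ℝ] (Fin d → ℝ) :=
  LinearMap.toContinuousLinearMap B.mulVecLin

@[simp] lemma expL_apply (u : ℝ) (v : Fin d → ℝ) :
    expL A u v = (exp (u • A)).mulVec v := rfl

@[simp] lemma bL_apply (v : Fin m → ℝ) : bL B v = B.mulVec v := rfl

lemma linSol_def (t : ℝ) (x : Fin d → ℝ) (ω : ℝ → Fin m → ℝ) :
    linSol A B t x ω = expL A t x + ∫ s in (0:ℝ)..t, expL A (t - s) (bL B (ω s)) := rfl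

lemma expL_add (s t : ℝ) (v : Fin d → ℝ) : expL A (s + t) v = expL A s (expL A t v) := by
  simp [exp_add_smul, Matrix.mulVec_mulVec]

@[simp] lemma expL_zero (v : Fin d → ℝ) : expL A 0 v = v := by
  simp [expL, exp_zero_smul]

lemma continuous_expL : Continuous fun u : ℝ => expL A u := by
  have h : Continuous fun M : Matrix (Fin d) (Fin d) ℝ =>
      (LinearMap.toContinuousLinearMap M.mulVecLin : (Fin d → ℝ) →L[ℝ] (Fin d → ℝ)) := by
    have : IsLinearMap ℝ fun M : Matrix (Fin d) (Fin d) ℝ =>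
        (LinearMap.toContinuousLinearMap M.mulVecLin : (Fin d → ℝ) →L[ℝ] (Fin d → ℝ)) := by
      constructor
      · intro M N; ext v; simp [Matrix.add_mulVec]
      · intro c M; ext v; simp [Matrix.smul_mulVec]
    exact (IsLinearMap.mk' _ this).continuous_of_finiteDimensional
  exact h.comp (continuous_exp_smul A)


lemma measurable_integrand {ω : ℝ → Fin m → ℝ} (hω : Measurable ω) (t : ℝ) :
    Measurable fun s : ℝ => expL A (t - s) (bL B (ω s)) := by
  have h1 : Continuous fun s : ℝ => expL A (t - s) :=
    (continuous_expL A).comp (continuous_const.sub continuous_id)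
  have h2 : Measurable fun s : ℝ => bL B (ω s) := (bL B).continuous.measurable.comp hω
  have heval : Continuous fun p : ((Fin d → ℝ) →L[ℝ] (Fin d → ℝ)) × (Fin d → ℝ) =>
      p.1 p.2 := isBoundedBilinearMap_apply.continuous
  exact heval.measurable.comp (h1.measurable.prodMk h2)

lemma intervalIntegrable_integrand {ω : ℝ → Fin m → ℝ} (hω : IsAdmissibleControl U ω)
    (hUc : IsCompact U) (t a b : ℝ) :
    IntervalIntegrable (fun s : ℝ => expL A (t - s) (bL B (ω s))) volume a b := by
  obtain ⟨C1, hC1⟩ := hUc.exists_bound_of_continuousOn (f := fun u => bL B u)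
    (bL B).continuous.continuousOn
  obtain ⟨C2, hC2⟩ := (isCompact_uIcc (a := a) (b := b)).exists_bound_of_continuousOn
    (f := fun s => expL A (t - s))
    (((continuous_expL A).comp (continuous_const.sub continuous_id)).continuousOn)
  rw [intervalIntegrable_iff]
  apply Integrable.mono' (g := fun _ => C2 * C1)
  · exact integrableOn_const measure_Ioc_lt_top.ne
  · exact ((measurable_integrand A B hω.1 t).aestronglyMeasurable).restrict
  · have hae : ∀ᵐ s : ℝ, ω s ∈ U := hω.2
    filter_upwards [ae_restrict_mem measurableSet_uIoc, ae_restrict_of_ae hae] with s hs hsU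
    calc ‖expL A (t - s) (bL B (ω s))‖ ≤ ‖expL A (t - s)‖ * ‖bL B (ω s)‖ :=
          (expL A (t - s)).le_opNorm _
      _ ≤ C2 * C1 := mul_le_mul (hC2 s (Set.uIoc_subset_uIcc hs)) (hC1 _ hsU)
          (norm_nonneg _) ((norm_nonneg _).trans (hC2 s (Set.uIoc_subset_uIcc hs)))


lemma linSol_congr {ω ω' : ℝ → Fin m → ℝ} (t : ℝ) (x : Fin d → ℝ)
    (h : ∀ᵐ s : ℝ, s ∈ Set.uIoc (0:ℝ) t → ω s = ω' s) :
    linSol A B t x ω = linSol A B t x ω' := by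
  unfold linSol
  congr 1
  apply intervalIntegral.integral_congr_ae
  filter_upwards [h] with s hs hmem
  rw [hs hmem]

lemma linSol_congr_ae {ω ω' : ℝ → Fin m → ℝ} (t : ℝ) (x : Fin d → ℝ)
    (h : ∀ᵐ s : ℝ, ω s = ω' s) :
    linSol A B t x ω = linSol A B t x ω' :=
  linSol_congr A B t x (by filter_upwards [h] with s hs _; exact hs)

@[simp] lemma linSol_zero (x : Fin d → ℝ) (ω : ℝ → Fin m → ℝ) :
    linSol A B 0 x ω = x := by
  rw [linSol_def]
  simp

lemma linSol_affine (t : ℝ) (x y : Fin d → ℝ) (ω : ℝ → Fin m → ℝ) :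
    linSol A B t y ω = linSol A B t x ω + expL A t (y - x) := by
  rw [linSol_def, linSol_def, map_sub]
  abel

lemma continuous_linSol_x (t : ℝ) (ω : ℝ → Fin m → ℝ) :
    Continuous fun x => linSol A B t x ω := by
  rw [show (fun x => linSol A B t x ω)
      = fun x => expL A t x + ∫ s in (0:ℝ)..t, expL A (t - s) (bL B (ω s)) from rfl]
  exact (expL A t).continuous.add continuous_const

/-- The cocycle property. -/
lemma linSol_cocycle {ω : ℝ → Fin m → ℝ} (hω : IsAdmissibleControl U ω)
    (hUc : IsCompact U) (s t : ℝ) (x : Fin d → ℝ) :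
    linSol A B (s + t) x ω = linSol A B t (linSol A B s x ω) (fun r => ω (r + s)) := by
  have hshift : IsAdmissibleControl U fun r => ω (r + s) := by
    constructor
    · exact hω.1.comp (measurable_add_const s)
    · have := (measurePreserving_add_right volume s).quasiMeasurePreserving.ae hω.2
      exact this
  rw [linSol_def, linSol_def, linSol_def]
  rw [map_add]
  -- exp term
  have he : expL A t (expL A s x) = expL A (s + t) x := by
    rw [add_comm s t, expL_add]
  -- pull expL A t inside the integral
  have hpull : expL A t (∫ r in (0:ℝ)..s, expL A (s - r) (bL B (ω r)))
      = ∫ r in (0:ℝ)..s, expL A (s + t - r) (bL B (ω r)) := by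
    rw [← ContinuousLinearMap.intervalIntegral_comp_comm _
      (intervalIntegrable_integrand A B hω hUc s 0 s)]
    apply intervalIntegral.integral_congr
    intro r _
    show expL A t (expL A (s - r) _) = _
    rw [← expL_add]
    ring_nf
  -- change of variables in the second integral
  have hsub : (∫ r in (0:ℝ)..t, expL A (t - r) (bL B (ω (r + s))))
      = ∫ r in s..(s + t), expL A (s + t - r) (bL B (ω r)) := by
    have := intervalIntegral.integral_comp_add_right (a := (0:ℝ)) (b := t)
      (fun r => expL A (s + t - r) (bL B (ω r))) s
    rw [zero_add, add_comm t s] at this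
    rw [← this]
    apply intervalIntegral.integral_congr
    intro r _
    congr 2
    ring
  rw [he, hpull, hsub]
  rw [add_assoc]
  congr 1
  exact (intervalIntegral.integral_add_adjacent_intervals
    (intervalIntegrable_integrand A B hω hUc (s+t) 0 s)
    (intervalIntegrable_integrand A B hω hUc (s+t) s (s+t))).symm


/-- Concatenation of two controls at time `s`. -/
def concat (s : ℝ) (ω₁ ω₂ : ℝ → Fin m → ℝ) : ℝ → Fin m → ℝ :=
  fun t => if t < s then ω₁ t else ω₂ (t - s)

lemma concat_admissible {s : ℝ} {ω₁ ω₂ : ℝ → Fin m → ℝ}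
    (h₁ : IsAdmissibleControl U ω₁) (h₂ : IsAdmissibleControl U ω₂) :
    IsAdmissibleControl U (concat s ω₁ ω₂) := by
  constructor
  · exact Measurable.ite (measurableSet_Iio (a := s)) h₁.1 (h₂.1.comp (measurable_sub_const s))
  · have h2' : ∀ᵐ t : ℝ, ω₂ (t - s) ∈ U :=
      (measurePreserving_sub_right volume s).quasiMeasurePreserving.ae h₂.2
    filter_upwards [h₁.2, h2'] with t ht1 ht2
    unfold concat
    split <;> assumption

lemma linSol_concat_left {s : ℝ} (ω₁ ω₂ : ℝ → Fin m → ℝ) {t : ℝ} (ht0 : 0 ≤ t) (hts : t ≤ s)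
    (x : Fin d → ℝ) : linSol A B t x (concat s ω₁ ω₂) = linSol A B t x ω₁ := by
  apply linSol_congr
  filter_upwards [ae_iff.2 (by simp : volume {r : ℝ | ¬ r ≠ s} = 0)] with r hr hmem
  have : r < s := lt_of_le_of_ne (le_trans (Set.uIoc_subset_uIcc hmem).2
    (by rwa [max_eq_right ht0])) hr
  simp [concat, this]

lemma linSol_concat_right {s : ℝ} {ω₁ ω₂ : ℝ → Fin m → ℝ}
    (h₁ : IsAdmissibleControl U ω₁) (h₂ : IsAdmissibleControl U ω₂) (hUc : IsCompact U)
    (hs : 0 ≤ s) {t : ℝ} (hts : s ≤ t) (x : Fin d → ℝ) :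
    linSol A B t x (concat s ω₁ ω₂) = linSol A B (t - s) (linSol A B s x ω₁) ω₂ := by
  have hc : IsAdmissibleControl U (concat s ω₁ ω₂) := concat_admissible h₁ h₂
  have h1 : linSol A B t x (concat s ω₁ ω₂)
      = linSol A B (t - s) (linSol A B s x (concat s ω₁ ω₂)) (fun r => concat s ω₁ ω₂ (r + s)) := by
    have := linSol_cocycle A B hc hUc s (t - s) x
    rw [add_sub_cancel] at this
    exact this
  rw [h1, linSol_concat_left A B ω₁ ω₂ hs le_rfl x]
  apply linSol_congr
  filter_upwards with r hmem
  have hr : 0 < r := by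
    have := hmem.1
    rwa [min_eq_left (by linarith : (0:ℝ) ≤ t - s)] at this
  have : ¬ (r + s < s) := by linarith
  simp [concat, this]


lemma linSol_concat_right' {s t : ℝ} {ω₁ ω₂ : ℝ → Fin m → ℝ}
    (h₁ : IsAdmissibleControl U ω₁) (h₂ : IsAdmissibleControl U ω₂) (hUc : IsCompact U)
    (hs : 0 ≤ s) (ht : 0 ≤ t) (x : Fin d → ℝ) :
    linSol A B (s + t) x (concat s ω₁ ω₂) = linSol A B t (linSol A B s x ω₁) ω₂ := by
  have := linSol_concat_right A B h₁ h₂ hUc hs (t := s + t) (by linarith) x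
  rwa [add_sub_cancel_left] at this

lemma shift_admissible {ω : ℝ → Fin m → ℝ} (hω : IsAdmissibleControl U ω) (c : ℝ) :
    IsAdmissibleControl U fun r => ω (r + c) :=
  ⟨hω.1.comp (measurable_add_const c),
    (measurePreserving_add_right volume c).quasiMeasurePreserving.ae hω.2⟩

lemma zero_admissible (hU0 : (0 : Fin m → ℝ) ∈ U) :
    IsAdmissibleControl U (fun _ : ℝ => (0 : Fin m → ℝ)) :=
  ⟨measurable_const, Eventually.of_forall fun _ => hU0⟩
section NoReturn

variable {A B} (hUc : IsCompact U) (hU0 : (0 : Fin m → ℝ) ∈ U)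
  {D : Set (Fin d → ℝ)} (hD : IsControlSet A B U D)

/-- The set of points reachable from `D` that can be steered back to `D`. -/
def tSet (A : Matrix (Fin d) (Fin d) ℝ) (B : Matrix (Fin d) (Fin m) ℝ)
    (U : Set (Fin m → ℝ)) (D : Set (Fin d → ℝ)) : Set (Fin d → ℝ) :=
  {z | (∃ x ∈ D, ∃ s ≥ (0:ℝ), ∃ ω, IsAdmissibleControl U ω ∧ z = linSol A B s x ω) ∧
    (∃ s ≥ (0:ℝ), ∃ ω, IsAdmissibleControl U ω ∧ linSol A B s z ω ∈ D)}

lemma subset_tSet (hU0 : (0 : Fin m → ℝ) ∈ U) : D ⊆ tSet A B U D := by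
  intro x hx
  refine ⟨⟨x, hx, 0, le_rfl, _, zero_admissible hU0, (linSol_zero A B x _).symm⟩,
    0, le_rfl, _, zero_admissible hU0, by rwa [linSol_zero]⟩

lemma tSet_eq (hUc : IsCompact U) (hU0 : (0 : Fin m → ℝ) ∈ U) (hD : IsControlSet A B U D) :
    tSet A B U D = D := by
  apply hD.2 _ (subset_tSet hU0)
  constructor
  · -- controlled invariance of tSet
    rintro z ⟨⟨x, hx, s₀, hs₀, ω₀, hω₀, hz⟩, s₁, hs₁, ω₁, hω₁, hy⟩
    obtain ⟨ω₂, hω₂, hω₂D⟩ := hD.1.1 _ hy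
    refine ⟨concat s₁ ω₁ ω₂, concat_admissible hω₁ hω₂, ?_⟩
    intro t ht
    rcases le_or_gt t s₁ with hts | hts
    · rw [linSol_concat_left A B ω₁ ω₂ ht hts]
      constructor
      · -- reachable from D
        refine ⟨x, hx, s₀ + t, by linarith, concat s₀ ω₀ ω₁,
          concat_admissible hω₀ hω₁, ?_⟩
        rw [linSol_concat_right' A B hω₀ hω₁ hUc hs₀ ht, ← hz]
      · -- can reach D
        refine ⟨s₁ - t, by linarith, fun r => ω₁ (r + t), shift_admissible hω₁ t, ?_⟩
        have := linSol_cocycle (U := U) A B hω₁ hUc t (s₁ - t) z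
        rw [add_sub_cancel] at this
        rw [← this]
        exact hy
    · rw [linSol_concat_right A B hω₁ hω₂ hUc hs₁ hts.le]
      exact subset_tSet hU0 (hω₂D _ (by linarith))
  · -- approximate controllability on tSet
    rintro z ⟨⟨x, hx, s₀, hs₀, ω₀, hω₀, hz⟩, s₁, hs₁, ω₁, hω₁, hy⟩
    rintro z' ⟨⟨x', hx', s₂, hs₂, ω', hω', hz'⟩, -⟩
    set y := linSol A B s₁ z ω₁ with hy'
    -- Reach_{>0}(y) ⊆ Reach_{>0}(z)
    have hsub : {w | ∃ s > (0:ℝ), ∃ ω, IsAdmissibleControl U ω ∧ w = linSol A B s y ω}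
        ⊆ {w | ∃ s > (0:ℝ), ∃ ω, IsAdmissibleControl U ω ∧ w = linSol A B s z ω} := by
      rintro w ⟨s, hs, ω, hω, hw⟩
      exact ⟨s₁ + s, by linarith, concat s₁ ω₁ ω, concat_admissible hω₁ hω,
        by rw [linSol_concat_right' A B hω₁ hω hUc hs₁ hs.le]; exact hw⟩
    -- g maps Reach_{>0}(y) into itself and x' to z'
    have himg : ∀ w ∈ {w | ∃ s > (0:ℝ), ∃ ω, IsAdmissibleControl U ω ∧ w = linSol A B s y ω},
        linSol A B s₂ w ω' ∈
          {w | ∃ s > (0:ℝ), ∃ ω, IsAdmissibleControl U ω ∧ w = linSol A B s y ω} := by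
      rintro w ⟨s, hs, ω, hω, hw⟩
      refine ⟨s + s₂, by linarith, concat s ω ω', concat_admissible hω hω', ?_⟩
      rw [linSol_concat_right' A B hω hω' hUc hs.le hs₂, hw]
    have hx'cl : x' ∈ closure {w | ∃ s > (0:ℝ), ∃ ω, IsAdmissibleControl U ω ∧
        w = linSol A B s y ω} := hD.1.2 y hy hx'
    have : z' ∈ closure {w | ∃ s > (0:ℝ), ∃ ω, IsAdmissibleControl U ω ∧
        w = linSol A B s y ω} := by
      rw [hz']
      have hcont : Continuous fun w => linSol A B s₂ w ω' := continuous_linSol_x A B s₂ ω'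
      have h1 : linSol A B s₂ x' ω' ∈ (fun w => linSol A B s₂ w ω') '' closure
          {w | ∃ s > (0:ℝ), ∃ ω, IsAdmissibleControl U ω ∧ w = linSol A B s y ω} :=
        ⟨x', hx'cl, rfl⟩
      have h2 := image_closure_subset_closure_image (f := fun w => linSol A B s₂ w ω') hcont
        (s := {w | ∃ s > (0:ℝ), ∃ ω, IsAdmissibleControl U ω ∧ w = linSol A B s y ω})
      have h3 : ((fun w => linSol A B s₂ w ω') ''
          {w | ∃ s > (0:ℝ), ∃ ω, IsAdmissibleControl U ω ∧ w = linSol A B s y ω}) ⊆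
          {w | ∃ s > (0:ℝ), ∃ ω, IsAdmissibleControl U ω ∧ w = linSol A B s y ω} :=
        Set.image_subset_iff.2 himg
      exact closure_mono h3 (h2 h1)
    exact closure_mono hsub this



lemma no_return (hUc : IsCompact U) (hU0 : (0 : Fin m → ℝ) ∈ U)
    (hD : IsControlSet A B U D) {x : Fin d → ℝ} {ω : ℝ → Fin m → ℝ} {s t : ℝ}
    (hx : x ∈ D) (hω : IsAdmissibleControl U ω) (ht0 : 0 ≤ t) (hts : t ≤ s)
    (hend : linSol A B s x ω ∈ D) : linSol A B t x ω ∈ D := by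
  rw [← tSet_eq hUc hU0 hD]
  refine ⟨⟨x, hx, t, ht0, ω, hω, rfl⟩,
    s - t, by linarith, fun r => ω (r + t), shift_admissible hω t, ?_⟩
  have := linSol_cocycle (U := U) A B hω hUc t (s - t) x
  rw [add_sub_cancel] at this
  rwa [← this]

end NoReturn
section Potential

variable {A B} {f : (Fin m → ℝ) → ℝ}

open scoped Classical in
/-- Purified control: replace values outside `U` by `0`. -/
def purify (U : Set (Fin m → ℝ)) (ω : ℝ → Fin m → ℝ) : ℝ → Fin m → ℝ :=
  fun t => if ω t ∈ U then ω t else 0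

lemma purify_mem (hU0 : (0 : Fin m → ℝ) ∈ U) (ω : ℝ → Fin m → ℝ) (t : ℝ) :
    purify U ω t ∈ U := by
  unfold purify
  split <;> simp [*, hU0]

lemma purify_ae_eq {ω : ℝ → Fin m → ℝ} (hω : IsAdmissibleControl U ω) :
    ∀ᵐ t : ℝ, purify U ω t = ω t := by
  filter_upwards [hω.2] with t ht
  simp [purify, ht]

lemma purify_admissible (hUc : IsCompact U) (hU0 : (0 : Fin m → ℝ) ∈ U)
    {ω : ℝ → Fin m → ℝ} (hω : IsAdmissibleControl U ω) :
    IsAdmissibleControl U (purify U ω) := by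
  refine ⟨?_, Eventually.of_forall (purify_mem hU0 ω)⟩
  classical
  exact Measurable.ite (hω.1 hUc.isClosed.measurableSet) hω.1 measurable_const

lemma measurable_f_comp (hf : ContinuousOn f U) {ω : ℝ → Fin m → ℝ}
    (hω : Measurable ω) (hmem : ∀ t, ω t ∈ U) :
    Measurable fun t => f (ω t) := by
  have hg : Continuous fun u : U => f u := continuousOn_iff_continuous_restrict.1 hf
  have hω' : Measurable fun t => (⟨ω t, hmem t⟩ : U) := hω.subtype_mk
  exact hg.measurable.comp hω'

lemma intervalIntegrable_f_comp (hf : ContinuousOn f U) (hUc : IsCompact U)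
    {M : ℝ} (hM : ∀ u ∈ U, |f u| ≤ M) {ω : ℝ → Fin m → ℝ}
    (hω : Measurable ω) (hmem : ∀ t, ω t ∈ U) (a b : ℝ) :
    IntervalIntegrable (fun t => f (ω t)) volume a b := by
  rw [intervalIntegrable_iff]
  apply Integrable.mono' (g := fun _ => M)
  · exact integrableOn_const measure_Ioc_lt_top.ne
  · exact ((measurable_f_comp hf hω hmem).aestronglyMeasurable).restrict
  · exact Eventually.of_forall fun t => by
      simpa [Real.norm_eq_abs] using hM _ (hmem t)

lemma integral_f_le (hf : ContinuousOn f U) (hUc : IsCompact U)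
    {M : ℝ} (hM : ∀ u ∈ U, |f u| ≤ M) {ω : ℝ → Fin m → ℝ}
    (hω : Measurable ω) (hmem : ∀ t, ω t ∈ U) {a b : ℝ} (hab : a ≤ b) :
    |∫ t in a..b, f (ω t)| ≤ (b - a) * M := by
  have := intervalIntegral.norm_integral_le_of_norm_le_const
    (C := M) (f := fun t => f (ω t)) (a := a) (b := b) ?_
  · rw [Real.norm_eq_abs] at this
    calc |∫ t in a..b, f (ω t)| ≤ M * |b - a| := this
      _ = (b - a) * M := by rw [abs_of_nonneg (by linarith : (0:ℝ) ≤ b - a)]; ring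
  · intro t ht
    rw [Set.uIoc_of_le hab] at ht
    simpa [Real.norm_eq_abs] using hM _ (hmem t)


lemma concat_mem {s : ℝ} {ω₁ ω₂ : ℝ → Fin m → ℝ} (h₁ : ∀ t, ω₁ t ∈ U)
    (h₂ : ∀ t, ω₂ t ∈ U) (t : ℝ) : concat s ω₁ ω₂ t ∈ U := by
  unfold concat
  split <;> [exact h₁ t; exact h₂ _]

/-- Key cost estimate for a concatenated control. -/
lemma cost_bound (hf : ContinuousOn f U) (hUc : IsCompact U)
    {M : ℝ} (hM0 : 0 ≤ M) (hM : ∀ u ∈ U, |f u| ≤ M)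
    {s τ : ℝ} (hs : 0 ≤ s) (hτ : 0 ≤ τ)
    {ω₁ ω₂ : ℝ → Fin m → ℝ} (hω₁ : Measurable ω₁) (hω₂ : Measurable ω₂)
    (h₁ : ∀ t, ω₁ t ∈ U) (h₂ : ∀ t, ω₂ t ∈ U) :
    (∫ t in (0:ℝ)..τ, f (concat s ω₁ ω₂ t)) ≤ 2 * s * M + ∫ t in (0:ℝ)..τ, f (ω₂ t) := by
  have hcm : Measurable (concat s ω₁ ω₂) :=
    Measurable.ite (measurableSet_Iio (a := s)) hω₁ (hω₂.comp (measurable_sub_const s))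
  have hcmem : ∀ t, concat s ω₁ ω₂ t ∈ U := concat_mem h₁ h₂
  rcases le_or_gt τ s with hts | hts
  · have hc := integral_f_le hf hUc hM hcm hcmem (le_of_eq rfl |>.trans hτ)
    rw [sub_zero] at hc
    have h2 := integral_f_le hf hUc hM hω₂ h₂ (a := 0) (b := τ) hτ
    rw [sub_zero] at h2
    have e1 := (abs_le.1 hc).2
    have e2 := (abs_le.1 h2).1
    nlinarith
  · -- τ > s
    have hsplit : (∫ t in (0:ℝ)..τ, f (concat s ω₁ ω₂ t))
        = (∫ t in (0:ℝ)..s, f (concat s ω₁ ω₂ t)) + ∫ t in s..τ, f (concat s ω₁ ω₂ t) :=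
      (intervalIntegral.integral_add_adjacent_intervals
        (intervalIntegrable_f_comp hf hUc hM hcm hcmem 0 s)
        (intervalIntegrable_f_comp hf hUc hM hcm hcmem s τ)).symm
    have hleft := integral_f_le hf hUc hM hcm hcmem (a := 0) (b := s) hs
    rw [sub_zero] at hleft
    have hmid : (∫ t in s..τ, f (concat s ω₁ ω₂ t)) = ∫ t in (0:ℝ)..(τ - s), f (ω₂ t) := by
      have h1 : (∫ t in s..τ, f (concat s ω₁ ω₂ t)) = ∫ t in s..τ, f (ω₂ (t - s)) := by
        apply intervalIntegral.integral_congr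
        intro r hr
        rw [Set.uIcc_of_le hts.le] at hr
        have : ¬ (r < s) := not_lt.2 hr.1
        simp [concat, this]
      rw [h1]
      have := intervalIntegral.integral_comp_sub_right (a := s) (b := τ)
        (fun t => f (ω₂ t)) s
      simpa using this
    have hsplit2 : (∫ t in (0:ℝ)..(τ - s), f (ω₂ t)) + (∫ t in (τ - s)..τ, f (ω₂ t))
        = ∫ t in (0:ℝ)..τ, f (ω₂ t) :=
      intervalIntegral.integral_add_adjacent_intervals
        (intervalIntegrable_f_comp hf hUc hM hω₂ h₂ 0 (τ - s))
        (intervalIntegrable_f_comp hf hUc hM hω₂ h₂ (τ - s) τ)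
    have htail := integral_f_le hf hUc hM hω₂ h₂ (a := τ - s) (b := τ) (by linarith)
    have e1 := (abs_le.1 hleft).2
    have e2 := (abs_le.1 htail).1
    rw [hsplit, hmid]
    have : (τ - (τ - s)) * M = s * M := by ring_nf
    nlinarith [e2]

end Potential
section Main

variable {A B} {f : (Fin m → ℝ) → ℝ} {D K₁ K₂ Q : Set (Fin d → ℝ)}

lemma aInv_le_const_mul (hUc : IsCompact U) (hU0 : (0 : Fin m → ℝ) ∈ U)
    (hD : IsControlSet A B U D)
    (hK₁c : IsCompact K₁) (hK₁D : K₁ ⊆ D) (hK₁n : K₁.Nonempty)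
    (hK₂D : K₂ ⊆ D) (hK₂i : (interior K₂).Nonempty)
    (hQ : D ⊆ Q) (hf : ContinuousOn f U) :
    ∃ C : ℝ≥0∞, C ≠ ⊤ ∧ 1 ≤ C ∧
      ∀ τ, 0 ≤ τ → aInv A B U K₁ Q f τ ≤ C * aInv A B U K₂ Q f τ := by
  obtain ⟨x₀, hx₀⟩ := hK₂i
  -- bound on |f| over U
  obtain ⟨M, hM⟩ := hUc.exists_bound_of_continuousOn hf
  have hM' : ∀ u ∈ U, |f u| ≤ M := fun u hu => by
    simpa [Real.norm_eq_abs] using hM u hu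
  have hM0 : 0 ≤ M := (abs_nonneg _).trans (hM' 0 hU0)
  -- steering data
  have hex : ∀ x : K₁, ∃ s : ℝ, 0 < s ∧ ∃ ω, IsAdmissibleControl U ω ∧
      linSol A B s x.1 ω ∈ interior K₂ := by
    rintro ⟨x, hx⟩
    have hcl : x₀ ∈ closure {y | ∃ s > (0:ℝ), ∃ ω, IsAdmissibleControl U ω ∧
        y = linSol A B s x ω} := hD.1.2 x (hK₁D hx) (hK₂D (interior_subset hx₀))
    obtain ⟨y, hyi, s, hs, ω, hω, hy⟩ := mem_closure_iff.1 hcl (interior K₂)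
      isOpen_interior hx₀
    exact ⟨s, hs, ω, hω, hy ▸ hyi⟩
  choose σ hσ ωf hωadm hωmem using hex
  -- open cover of K₁
  set V : K₁ → Set (Fin d → ℝ) :=
    fun i => (fun x' => linSol A B (σ i) x' (ωf i)) ⁻¹' interior K₂ with hV
  obtain ⟨t, ht⟩ := hK₁c.elim_finite_subcover V
    (fun i => isOpen_interior.preimage (continuous_linSol_x A B (σ i) (ωf i)))
    (fun x hx => Set.mem_iUnion.2 ⟨⟨x, hx⟩, hωmem ⟨x, hx⟩⟩)
  have htne : t.Nonempty := by
    obtain ⟨x, hx⟩ := hK₁n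
    obtain ⟨i, hi, -⟩ := Set.mem_iUnion₂.1 (ht hx)
    exact ⟨i, hi⟩
  -- the constant
  set Creal : ℝ := ∑ i ∈ t, Real.exp (2 * σ i * M) with hCreal
  refine ⟨ENNReal.ofReal Creal, ENNReal.ofReal_ne_top, ?_, ?_⟩
  · rw [show (1:ℝ≥0∞) = ENNReal.ofReal 1 by simp]
    apply ENNReal.ofReal_le_ofReal
    obtain ⟨i₀, hi₀⟩ := htne
    calc (1:ℝ) ≤ Real.exp (2 * σ i₀ * M) :=
          Real.one_le_exp (mul_nonneg (mul_nonneg (by norm_num) (hσ i₀).le) hM0)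
      _ ≤ Creal := Finset.single_le_sum (f := fun i => Real.exp (2 * σ i * M))
          (fun i _ => (Real.exp_pos _).le) hi₀
  intro τ hτ
  set C := ENNReal.ofReal Creal with hC
  have hC0 : C ≠ 0 := by
    rw [hC, Ne, ENNReal.ofReal_eq_zero, not_le]
    obtain ⟨i₀, hi₀⟩ := htne
    exact lt_of_lt_of_le (Real.exp_pos _) (Finset.single_le_sum
      (f := fun i => Real.exp (2 * σ i * M)) (fun i _ => (Real.exp_pos _).le) hi₀)
  -- main claim: for each countable spanning set S₂ of (K₂,Q),
  -- a₁ ≤ C * (sum over S₂)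
  have claim : ∀ S₂ : Set (ℝ → Fin m → ℝ), S₂.Countable →
      IsSpanningSet A B U K₂ Q τ S₂ →
      aInv A B U K₁ Q f τ ≤
        C * ∑' ω : S₂, ENNReal.ofReal (Real.exp (∫ r in (0:ℝ)..τ, f (ω.1 r))) := by
    intro S₂ hS₂c hS₂
    haveI : Countable S₂ := hS₂c.to_subtype
    set π : {i // i ∈ t} × S₂ → (ℝ → Fin m → ℝ) :=
      fun p => concat (σ p.1.1) (purify U (ωf p.1.1)) (purify U p.2.1) with hπ
    set S₁ : Set (ℝ → Fin m → ℝ) := Set.range π with hS₁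
    have hπadm : ∀ p, IsAdmissibleControl U (π p) := by
      intro p
      exact concat_admissible (purify_admissible hUc hU0 (hωadm p.1.1))
        (purify_admissible hUc hU0 (hS₂.1 p.2.1 p.2.2))
    have hspan₁ : IsSpanningSet A B U K₁ Q τ S₁ := by
      constructor
      · rintro ω ⟨p, rfl⟩; exact hπadm p
      · intro x hx
        obtain ⟨i, hi, hxV⟩ := Set.mem_iUnion₂.1 (ht hx)
        have hy : linSol A B (σ i) x (ωf i) ∈ interior K₂ := hxV
        obtain ⟨ω', hω'S, hω'⟩ := hS₂.2 _ (interior_subset hy)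
        refine ⟨π ⟨⟨i, hi⟩, ⟨ω', hω'S⟩⟩, ⟨_, rfl⟩, ?_⟩
        intro r hr
        rcases le_or_gt r (σ i) with hrs | hrs
        · rw [linSol_concat_left A B _ _ hr.1 hrs,
            linSol_congr_ae A B r x (purify_ae_eq (hωadm i))]
          apply hQ
          exact no_return hUc hU0 hD (hK₁D hx) (hωadm i) hr.1 hrs
            (hK₂D (interior_subset hy))
        · rw [linSol_concat_right A B (purify_admissible hUc hU0 (hωadm i))
            (purify_admissible hUc hU0 (hS₂.1 ω' hω'S)) hUc (hσ i).le hrs.le,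
            linSol_congr_ae A B (σ i) x (purify_ae_eq (hωadm i)),
            linSol_congr_ae A B (r - σ i) _ (purify_ae_eq (hS₂.1 ω' hω'S))]
          exact hω' _ ⟨by linarith [hσ i], by linarith [hσ i, hr.2]⟩
    have hS₁c : S₁.Countable := Set.countable_range π
    -- a₁ ≤ sum over S₁
    have step1 : aInv A B U K₁ Q f τ ≤
        ∑' ω : S₁, ENNReal.ofReal (Real.exp (∫ r in (0:ℝ)..τ, f (ω.1 r))) := by
      refine iInf_le_of_le S₁ ?_
      refine iInf_le_of_le hS₁c ?_
      exact iInf_le _ hspan₁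
    -- sum over S₁ ≤ sum over pairs
    set g : (ℝ → Fin m → ℝ) → ℝ≥0∞ :=
      fun ω => ENNReal.ofReal (Real.exp (∫ r in (0:ℝ)..τ, f (ω r))) with hg
    have step2 : (∑' ω : S₁, g ω.1) ≤ ∑' p, g (π p) := by
      have hpre : ∀ y : S₁, ∃ p, π p = y.1 := fun y => y.2
      choose pre hpre using hpre
      have hinj : Function.Injective pre := by
        intro y₁ y₂ h
        apply Subtype.ext
        rw [← hpre y₁, ← hpre y₂, h]
      calc (∑' ω : S₁, g ω.1) = ∑' ω : S₁, (g ∘ π) (pre ω) := by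
            apply tsum_congr; intro y; simp [Function.comp, hpre y]
        _ ≤ ∑' p, (g ∘ π) p := ENNReal.tsum_comp_le_tsum_of_injective hinj _
        _ = ∑' p, g (π p) := rfl
    -- per-term bound
    have step3 : ∀ p : {i // i ∈ t} × S₂,
        g (π p) ≤ ENNReal.ofReal (Real.exp (2 * σ p.1.1 * M)) * g p.2.1 := by
      rintro ⟨⟨i, hi⟩, ⟨ω', hω'S⟩⟩
      have hω'adm := hS₂.1 ω' hω'S
      have hint : (∫ r in (0:ℝ)..τ, f (concat (σ i) (purify U (ωf i)) (purify U ω') r))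
          ≤ 2 * σ i * M + ∫ r in (0:ℝ)..τ, f (purify U ω' r) :=
        cost_bound hf hUc hM0 hM' (hσ i).le hτ
          (purify_admissible hUc hU0 (hωadm i)).1
          (purify_admissible hUc hU0 hω'adm).1
          (purify_mem hU0 _) (purify_mem hU0 _)
      have hpe : (∫ r in (0:ℝ)..τ, f (purify U ω' r)) = ∫ r in (0:ℝ)..τ, f (ω' r) := by
        apply intervalIntegral.integral_congr_ae
        filter_upwards [purify_ae_eq hω'adm] with r hr _
        rw [hr]
      rw [hpe] at hint
      simp only [hg]
      rw [← ENNReal.ofReal_mul (Real.exp_pos _).le, ← Real.exp_add]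
      exact ENNReal.ofReal_le_ofReal (Real.exp_le_exp.2 hint)
    -- sum the bound
    have step4 : (∑' p, g (π p)) ≤ C * ∑' ω : S₂, g ω.1 := by
      calc (∑' p, g (π p))
          ≤ ∑' p : {i // i ∈ t} × S₂,
            ENNReal.ofReal (Real.exp (2 * σ p.1.1 * M)) * g p.2.1 :=
            ENNReal.tsum_le_tsum step3
        _ = ∑' i : {i // i ∈ t}, ∑' ω : S₂,
            ENNReal.ofReal (Real.exp (2 * σ i.1 * M)) * g ω.1 :=
            ENNReal.tsum_prod (f := fun (i : {i // i ∈ t}) (ω : S₂) =>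
              ENNReal.ofReal (Real.exp (2 * σ i.1 * M)) * g ω.1)
        _ = ∑' i : {i // i ∈ t},
            ENNReal.ofReal (Real.exp (2 * σ i.1 * M)) * ∑' ω : S₂, g ω.1 := by
            apply tsum_congr; intro i; rw [ENNReal.tsum_mul_left]
        _ = (∑' i : {i // i ∈ t}, ENNReal.ofReal (Real.exp (2 * σ i.1 * M)))
            * ∑' ω : S₂, g ω.1 := ENNReal.tsum_mul_right
        _ = C * ∑' ω : S₂, g ω.1 := by
            congr 1
            rw [tsum_fintype, hC, hCreal]
            rw [Finset.univ_eq_attach, ENNReal.ofReal_sum_of_nonneg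
              (fun i _ => (Real.exp_pos _).le)]
            exact (Finset.sum_attach t fun i => ENNReal.ofReal (Real.exp (2 * σ i * M)))
    exact step1.trans (step2.trans step4)
  -- conclude via division
  have hdiv : aInv A B U K₁ Q f τ / C ≤ aInv A B U K₂ Q f τ := by
    unfold aInv
    refine le_iInf fun S₂ => le_iInf fun hc => le_iInf fun hsp => ?_
    rw [ENNReal.div_le_iff_le_mul (Or.inl hC0) (Or.inl ENNReal.ofReal_ne_top)]
    rw [mul_comm]
    exact claim S₂ hc hsp
  rw [mul_comm]
  rw [← ENNReal.div_le_iff_le_mul (Or.inl hC0) (Or.inl ENNReal.ofReal_ne_top)]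
  exact hdiv

lemma ereal_mul_le {r cr : ℝ} (hr : 0 < r) (a b : EReal)
    (hab : a ≤ (cr : EReal) + b) :
    (r : EReal) * a ≤ ((r * cr : ℝ) : EReal) + (r : EReal) * b := by
  induction b with
  | bot =>
    rw [EReal.add_bot] at hab
    rw [le_bot_iff.1 hab, EReal.mul_bot_of_pos (by exact_mod_cast hr)]
    exact bot_le
  | coe y =>
    induction a with
    | bot =>
      rw [EReal.mul_bot_of_pos (by exact_mod_cast hr)]
      exact bot_le
    | coe z =>
      rw [← EReal.coe_add] at hab
      have hzy : z ≤ cr + y := by exact_mod_cast hab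
      rw [← EReal.coe_mul, ← EReal.coe_mul, ← EReal.coe_add]
      exact_mod_cast (by nlinarith : r * z ≤ r * cr + r * y)
    | top =>
      rw [← EReal.coe_add] at hab
      exact absurd hab (not_le.2 (EReal.coe_lt_top (cr + y)))
  | top =>
    rw [EReal.mul_top_of_pos (by exact_mod_cast hr)]
    rw [EReal.add_top_of_ne_bot (EReal.coe_ne_bot _)]
    exact le_top

lemma pInv_le_of_aInv_le {A : Matrix (Fin d) (Fin d) ℝ} {B : Matrix (Fin d) (Fin m) ℝ}
    {U : Set (Fin m → ℝ)} {K₁ K₂ Q : Set (Fin d → ℝ)} {f : (Fin m → ℝ) → ℝ}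
    {C : ℝ≥0∞} (hCt : C ≠ ⊤) (hC1 : 1 ≤ C)
    (h : ∀ τ, 0 ≤ τ → aInv A B U K₁ Q f τ ≤ C * aInv A B U K₂ Q f τ) :
    PInv A B U K₁ Q f ≤ PInv A B U K₂ Q f := by
  set c : EReal := C.log with hc
  have hc0 : 0 ≤ c := by
    rw [hc]
    rw [← ENNReal.log_one]
    exact ENNReal.log_monotone hC1
  have hctop : c ≠ ⊤ := by
    rw [hc, Ne, ENNReal.log_eq_top_iff]
    exact hCt
  have hcbot : c ≠ ⊥ := ne_bot_of_le_ne_bot (by simp) hc0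
  set cr : ℝ := c.toReal with hcr
  have hcrc : (cr : EReal) = c := EReal.coe_toReal hctop hcbot
  set v : ℝ → EReal := fun τ => ((1 / τ * cr : ℝ) : EReal) with hv
  set w : ℝ → EReal := fun τ => ((1 / τ : ℝ) : EReal) * (aInv A B U K₂ Q f τ).log with hw
  have hevent : ∀ᶠ τ : ℝ in atTop,
      ((1 / τ : ℝ) : EReal) * (aInv A B U K₁ Q f τ).log ≤ v τ + w τ := by
    filter_upwards [eventually_ge_atTop (1:ℝ)] with τ hτ
    have hτ0 : (0:ℝ) < τ := lt_of_lt_of_le one_pos hτ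
    have hr : (0:ℝ) < 1 / τ := by positivity
    have hlog : (aInv A B U K₁ Q f τ).log ≤ (cr : EReal) + (aInv A B U K₂ Q f τ).log := by
      rw [hcrc, hc]
      calc (aInv A B U K₁ Q f τ).log ≤ (C * aInv A B U K₂ Q f τ).log :=
            ENNReal.log_monotone (h τ hτ0.le)
        _ = C.log + (aInv A B U K₂ Q f τ).log := ENNReal.log_mul_add
    exact ereal_mul_le hr _ _ hlog
  have hlimsup1 : PInv A B U K₁ Q f ≤ Filter.limsup (fun τ => v τ + w τ) atTop :=
    Filter.limsup_le_limsup hevent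
  have hvtend : Tendsto v atTop (𝓝 (0:EReal)) := by
    have hrt : Tendsto (fun τ : ℝ => 1 / τ * cr) atTop (𝓝 0) := by
      have := tendsto_inv_atTop_zero (𝕜 := ℝ)
      have h2 := this.mul_const cr
      rw [zero_mul] at h2
      simpa [one_div] using h2
    have := EReal.tendsto_coe (m := fun τ : ℝ => 1 / τ * cr) (a := 0) |>.2 hrt
    simpa [hv] using this
  have hvlim : Filter.limsup v atTop = 0 := hvtend.limsup_eq
  have hadd : Filter.limsup (fun τ => v τ + w τ) atTop
      ≤ Filter.limsup v atTop + Filter.limsup w atTop :=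
    EReal.limsup_add_le (Or.inl (by rw [hvlim]; simp)) (Or.inl (by rw [hvlim]; simp))
  calc PInv A B U K₁ Q f ≤ Filter.limsup (fun τ => v τ + w τ) atTop := hlimsup1
    _ ≤ Filter.limsup v atTop + Filter.limsup w atTop := hadd
    _ = PInv A B U K₂ Q f := by rw [hvlim, zero_add]; rfl


/-- Two compact sets `K₁, K₂` with nonempty interior contained in a control set `D` with
nonempty interior give admissible pairs `(K₁,Q)`, `(K₂,Q)` (for any `Q ⊇ D`) with the same
invariance pressure for every continuous potential. -/
theorem pInv_indep_of_compact_subset {d m : ℕ} (A : Matrix (Fin d) (Fin d) ℝ)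
    (B : Matrix (Fin d) (Fin m) ℝ) (hKal : KalmanRank A B)
    (U : Set (Fin m → ℝ)) (hUc : IsCompact U) (hU0 : U ∈ 𝓝 (0 : Fin m → ℝ))
    (D : Set (Fin d → ℝ)) (hD : IsControlSet A B U D) (hDi : (interior D).Nonempty)
    (K₁ K₂ : Set (Fin d → ℝ)) (hK₁c : IsCompact K₁) (hK₁D : K₁ ⊆ D)
    (hK₁i : (interior K₁).Nonempty) (hK₂c : IsCompact K₂) (hK₂D : K₂ ⊆ D)
    (hK₂i : (interior K₂).Nonempty) (Q : Set (Fin d → ℝ)) (hQ : D ⊆ Q)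
    (f : (Fin m → ℝ) → ℝ) (hf : ContinuousOn f U) :
    IsAdmissiblePair A B U K₁ Q ∧ IsAdmissiblePair A B U K₂ Q ∧
      PInv A B U K₁ Q f = PInv A B U K₂ Q f := by
  have hU0' : (0 : Fin m → ℝ) ∈ U := mem_of_mem_nhds hU0
  have hQne : Q.Nonempty := by
    obtain ⟨z, hz⟩ := hDi
    exact ⟨z, hQ (interior_subset hz)⟩
  have hpair : ∀ K : Set (Fin d → ℝ), IsCompact K → K ⊆ D → (interior K).Nonempty →
      IsAdmissiblePair A B U K Q := by
    intro K hKc hKD hKi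
    obtain ⟨x, hx⟩ := hKi
    refine ⟨⟨x, interior_subset hx⟩, hQne, hKc, ?_⟩
    intro y hy
    obtain ⟨ω, hω, hinv⟩ := hD.1.1 y (hKD hy)
    exact ⟨ω, hω, fun t ht => hQ (hinv t ht)⟩
  refine ⟨hpair K₁ hK₁c hK₁D hK₁i, hpair K₂ hK₂c hK₂D hK₂i, ?_⟩
  have hK₁n : K₁.Nonempty := by
    obtain ⟨x, hx⟩ := hK₁i; exact ⟨x, interior_subset hx⟩
  have hK₂n : K₂.Nonempty := by
    obtain ⟨x, hx⟩ := hK₂i; exact ⟨x, interior_subset hx⟩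
  obtain ⟨C₁, hC₁t, hC₁1, hC₁⟩ :=
    aInv_le_const_mul (f := f) hUc hU0' hD hK₁c hK₁D hK₁n hK₂D hK₂i hQ hf
  obtain ⟨C₂, hC₂t, hC₂1, hC₂⟩ :=
    aInv_le_const_mul (f := f) hUc hU0' hD hK₂c hK₂D hK₂n hK₁D hK₁i hQ hf
  exact le_antisymm (pInv_le_of_aInv_le hC₁t hC₁1 hC₁) (pInv_le_of_aInv_le hC₂t hC₂1 hC₂)


end Main

end
end
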